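/- arXiv:2502.06144 — 4 statements merged into one kernel-verified Lean document; each statement's English description precedes it below -/
import Mathlib

section
/- Let Γ be a finitely generated group with finite symmetric generating set S, 1 ∉ S, such that Cay(Γ,S) is automorphism-regular. Then for every r ∈ ℕ there exists r₀ ≥ r such that every rooted automorphism of the ball B(e, r₀) in Cay(Γ,S) fixes the ball B(e, r) pointwise. -/
open SimpleGraph

def cayley (Γ : Type*) [Group Γ] (S : Set Γ) : SimpleGraph Γ where
  Adj g h := g ≠ h ∧ (g⁻¹ * h ∈ S ∨ h⁻¹ * g ∈ S)
  symm := ⟨fun g h ⟨hne, hs⟩ => ⟨hne.symm, hs.symm⟩⟩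
  loopless := ⟨fun g ⟨hne, _⟩ => hne rfl⟩

def ballSet {V : Type*} (G : SimpleGraph V) (v : V) (r : ℕ) : Set V :=
  {w | G.edist v w ≤ r}

lemma root_mem_ballSet {V : Type*} (G : SimpleGraph V) (v : V) (r : ℕ) :
    v ∈ ballSet G v r := by simp [ballSet]

/-- The ball of radius `r` around `v`, as a rooted graph: the induced subgraph. -/
abbrev ballGraph {V : Type*} (G : SimpleGraph V) (v : V) (r : ℕ) :
    SimpleGraph (ballSet G v r) := G.induce (ballSet G v r)

abbrev ballRoot {V : Type*} (G : SimpleGraph V) (v : V) (r : ℕ) : ballSet G v r :=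
  ⟨v, root_mem_ballSet G v r⟩

/-- The ball of radius `r` around `v` in `G` is rooted-isomorphic to the ball of
radius `r` around `v'` in `G'`. -/
def BallRootedIso {V V' : Type*} (G : SimpleGraph V) (v : V)
    (G' : SimpleGraph V') (v' : V') (r : ℕ) : Prop :=
  ∃ f : ballGraph G v r ≃g ballGraph G' v' r, f (ballRoot G v r) = ballRoot G' v' r

def rightCosetSetoid {Γ : Type*} [Group Γ] (Λ : Subgroup Γ) : Setoid Γ where
  r g h := g * h⁻¹ ∈ Λ
  iseqv := by
    refine ⟨fun g => by simp [Λ.one_mem], fun {g h} hm => ?_, fun {g h k} h1 h2 => ?_⟩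
    · simpa [mul_inv_rev] using Λ.inv_mem hm
    · simpa [mul_assoc] using Λ.mul_mem h1 h2

/-- The Schreier graph of the right cosets `Λ\Γ` with respect to `S`. -/
def schreier {Γ : Type*} [Group Γ] (Λ : Subgroup Γ) (S : Set Γ) :
    SimpleGraph (Quotient (rightCosetSetoid Λ)) where
  Adj x y := x ≠ y ∧ ∃ g s, s ∈ S ∧
    ((x = Quotient.mk _ g ∧ y = Quotient.mk _ (g * s)) ∨
     (y = Quotient.mk _ g ∧ x = Quotient.mk _ (g * s)))
  symm := ⟨fun x y ⟨hne, g, s, hs, h⟩ => ⟨hne.symm, g, s, hs, h.symm⟩⟩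
  loopless := ⟨fun x ⟨hne, _⟩ => hne rfl⟩


-- iso preserves edist
lemma iso_edist_le {V W : Type*} {G : SimpleGraph V} {G' : SimpleGraph W} (f : G ≃g G')
    (u v : V) : G'.edist (f u) (f v) ≤ G.edist u v := by
  rcases eq_or_ne (G.edist u v) ⊤ with h | h
  · simp [h]
  · obtain ⟨p, hp⟩ := G.exists_walk_of_edist_ne_top h
    calc G'.edist (f u) (f v) ≤ (p.map f.toHom).length := edist_le _
    _ = G.edist u v := by rw [Walk.length_map, hp]

lemma iso_edist_eq {V W : Type*} {G : SimpleGraph V} {G' : SimpleGraph W} (f : G ≃g G')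
    (u v : V) : G'.edist (f u) (f v) = G.edist u v := by
  refine le_antisymm (iso_edist_le f u v) ?_
  have := iso_edist_le f.symm (f u) (f v)
  simpa using this

-- walk into induced subgraph
lemma walk_to_induce {V : Type*} {G : SimpleGraph V} {s : Set V} {a b : V} (p : G.Walk a b)
    (hp : ∀ x ∈ p.support, x ∈ s) (ha : a ∈ s) (hb : b ∈ s) :
    ∃ q : (G.induce s).Walk ⟨a, ha⟩ ⟨b, hb⟩, q.length = p.length := by
  induction p with
  | nil => exact ⟨Walk.nil, rfl⟩
  | @cons u c w h p ih =>
    have hc : c ∈ s := hp c (by simp)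
    obtain ⟨q, hq⟩ := ih (fun x hx => hp x (by simp [hx])) hc hb
    exact ⟨Walk.cons (by simpa using h) q, by simp [hq]⟩
-- edist in the ball graph from the root agrees with edist in G
lemma ballGraph_edist_root {V : Type*} (G : SimpleGraph V) (v : V) (n : ℕ) (u : V)
    (hu : u ∈ ballSet G v n) :
    (ballGraph G v n).edist (ballRoot G v n) ⟨u, hu⟩ = G.edist v u := by
  classical
  refine le_antisymm ?_ ?_
  · -- build a walk in the ball from a geodesic in G
    have hne : G.edist v u ≠ ⊤ := fun h => by simp [ballSet, h] at hu
    obtain ⟨p, hp⟩ := G.exists_walk_of_edist_ne_top hne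
    have hsupp : ∀ x ∈ p.support, x ∈ ballSet G v n := by
      intro x hx
      have h1 : G.edist v x ≤ (p.takeUntil x hx).length := edist_le _
      have h2 : (p.takeUntil x hx).length ≤ p.length := Walk.length_takeUntil_le p hx
      have : G.edist v x ≤ p.length := h1.trans (by exact_mod_cast h2)
      exact le_trans this (by rw [hp]; exact hu)
    obtain ⟨q, hq⟩ := walk_to_induce p hsupp (root_mem_ballSet G v n) hu
    calc (ballGraph G v n).edist _ _ ≤ (q.length : ℕ∞) := edist_le q
    _ = G.edist v u := by rw [hq, hp]
  · -- map a walk in the ball to G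
    rcases eq_or_ne ((ballGraph G v n).edist (ballRoot G v n) ⟨u, hu⟩) ⊤ with h | h
    · simp [h]
    · obtain ⟨q, hq⟩ := (ballGraph G v n).exists_walk_of_edist_ne_top h
      calc G.edist v u ≤ (q.map (SimpleGraph.Embedding.induce _).toHom).length := edist_le _
      _ = _ := by rw [Walk.length_map, hq]

section Cayley
variable {Γ : Type*} [Group Γ] {S : Set Γ}

lemma cayley_adj (hsymm : S⁻¹ = S) {g h : Γ} :
    (cayley Γ S).Adj g h ↔ g ≠ h ∧ g⁻¹ * h ∈ S := by
  have key : h⁻¹ * g ∈ S ↔ g⁻¹ * h ∈ S := by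
    constructor
    · intro hm
      have : (h⁻¹ * g)⁻¹ ∈ S⁻¹ := Set.inv_mem_inv.mpr hm
      rwa [hsymm, mul_inv_rev, inv_inv] at this
    · intro hm
      have : (g⁻¹ * h)⁻¹ ∈ S⁻¹ := Set.inv_mem_inv.mpr hm
      rwa [hsymm, mul_inv_rev, inv_inv] at this
  show g ≠ h ∧ (g⁻¹ * h ∈ S ∨ h⁻¹ * g ∈ S) ↔ _
  rw [key, or_self]

/-- Left multiplication as an automorphism of the Cayley graph. -/
def cayleyMulLeft (S : Set Γ) (a : Γ) : cayley Γ S ≃g cayley Γ S where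
  toEquiv := Equiv.mulLeft a
  map_rel_iff' := by
    intro g h
    show (cayley Γ S).Adj (a * g) (a * h) ↔ (cayley Γ S).Adj g h
    simp [cayley, mul_assoc, mul_inv_rev]

@[simp] lemma cayleyMulLeft_apply (a g : Γ) : cayleyMulLeft S a g = a * g := rfl

lemma cayley_reachable (hgen : Subgroup.closure S = ⊤) (hsymm : S⁻¹ = S)
    (hone : (1 : Γ) ∉ S) (w : Γ) : (cayley Γ S).Reachable 1 w := by
  have hw : w ∈ Subgroup.closure S := by rw [hgen]; trivial
  induction hw using Subgroup.closure_induction with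
  | mem s hs =>
      exact Adj.reachable ((cayley_adj hsymm).mpr ⟨fun h => hone (h ▸ hs), by simpa using hs⟩)
  | one => exact Reachable.refl 1
  | mul g h _ _ hg hh =>
      refine hg.trans ?_
      have := hh.map (cayleyMulLeft S g).toHom
      simpa using this
  | inv g _ hg =>
      have := hg.map (cayleyMulLeft S g⁻¹).toHom
      simpa using this.symm

/-- Words of length at most `n` in `S`. -/
def wordSet (S : Set Γ) : ℕ → Set Γ
  | 0 => {1}
  | n + 1 => wordSet S n ∪ (fun p : Γ × Γ => p.1 * p.2) '' ((wordSet S n) ×ˢ S)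

lemma one_mem_wordSet (S : Set Γ) : ∀ n, (1 : Γ) ∈ wordSet S n
  | 0 => rfl
  | n + 1 => Or.inl (one_mem_wordSet S n)

lemma wordSet_finite (hfin : S.Finite) : ∀ n, (wordSet S n).Finite
  | 0 => Set.finite_singleton 1
  | n + 1 => ((wordSet_finite hfin n).union
      (((wordSet_finite hfin n).prod hfin).image _))

lemma mem_wordSet_of_walk (hsymm : S⁻¹ = S) :
    ∀ (n : ℕ) (w : Γ) (p : (cayley Γ S).Walk w 1), p.length ≤ n → w ∈ wordSet S n := by
  intro n
  induction n with
  | zero =>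
    intro w p hp
    have := Walk.eq_of_length_eq_zero (Nat.le_zero.mp hp)
    exact this ▸ rfl
  | succ n ih =>
    intro w p hp
    cases p with
    | nil => exact one_mem_wordSet S (n + 1)
    | @cons _ u _ h q =>
      have hu : u ∈ wordSet S n := ih u q (by simpa using Nat.succ_le_succ_iff.mp (by simpa using hp))
      have hadj := (cayley_adj hsymm).mp h
      -- w⁻¹ * u ∈ S, so w = u * (u⁻¹ * w) with u⁻¹ * w ∈ S
      have hs : u⁻¹ * w ∈ S := by
        have : (w⁻¹ * u)⁻¹ ∈ S⁻¹ := Set.inv_mem_inv.mpr hadj.2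
        rwa [hsymm, mul_inv_rev, inv_inv] at this
      exact Or.inr ⟨⟨u, u⁻¹ * w⟩, ⟨hu, hs⟩, by simp⟩

lemma ballSet_cayley_finite (hfin : S.Finite) (hsymm : S⁻¹ = S) (n : ℕ) :
    (ballSet (cayley Γ S) 1 n).Finite := by
  refine (wordSet_finite hfin n).subset ?_
  intro w hw
  have hne : (cayley Γ S).edist 1 w ≠ ⊤ := fun h => by simp [ballSet, h] at hw
  obtain ⟨p, hp⟩ := (cayley Γ S).exists_walk_of_edist_ne_top hne
  have hlen : (p.length : ℕ∞) ≤ n := by rw [hp]; exact hw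
  exact mem_wordSet_of_walk hsymm n w p.reverse (by simpa using (by exact_mod_cast hlen))

end Cayley

lemma aut_edist_root {V : Type*} (G : SimpleGraph V) (v : V) (n : ℕ)
    (f : ballGraph G v n ≃g ballGraph G v n) (hf : f (ballRoot G v n) = ballRoot G v n)
    (x : ballSet G v n) : G.edist v (f x : V) = G.edist v (x : V) := by
  have e1 := ballGraph_edist_root G v n (x : V) x.2
  have e2 := ballGraph_edist_root G v n ((f x : V)) (f x).2
  have e3 := iso_edist_eq f (ballRoot G v n) x
  rw [hf] at e3
  calc G.edist v (f x : V)
      = (ballGraph G v n).edist (ballRoot G v n) ⟨(f x : V), (f x).2⟩ := e2.symm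
    _ = (ballGraph G v n).edist (ballRoot G v n) (f x) := by rw [Subtype.eta]
    _ = (ballGraph G v n).edist (ballRoot G v n) ⟨(x : V), x.2⟩ := by rw [Subtype.eta]; exact e3
    _ = G.edist v (x : V) := e1

/-- If the Cayley graph is automorphism-regular, then for every `r` there is `r₀ ≥ r`
such that every rooted automorphism of the ball `B(e, r₀)` fixes `B(e, r)` pointwise. -/
theorem exists_radius_rooted_aut_fixes_ball (Γ : Type*) [Group Γ] (S : Set Γ)
    (hfin : S.Finite) (hgen : Subgroup.closure S = ⊤) (hsymm : S⁻¹ = S) (hone : (1 : Γ) ∉ S)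
    (hreg : ∀ φ : cayley Γ S ≃g cayley Γ S, ∀ v : Γ, φ v = v → ∀ w : Γ, φ w = w)
    (r : ℕ) :
    ∃ r₀ : ℕ, r ≤ r₀ ∧
      ∀ φ : ballGraph (cayley Γ S) 1 r₀ ≃g ballGraph (cayley Γ S) 1 r₀,
        φ (ballRoot (cayley Γ S) 1 r₀) = ballRoot (cayley Γ S) 1 r₀ →
        ∀ (w : Γ) (hw : (cayley Γ S).edist 1 w ≤ r) (hw₀ : w ∈ ballSet (cayley Γ S) 1 r₀),
          (φ ⟨w, hw₀⟩ : Γ) = w := by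
  classical
  by_contra hcon
  push_neg at hcon
  choose φ hroot wit hwit1 hwit2 hwit3 using fun n : ℕ => hcon (r + n) (Nat.le_add_right r n)
  -- distance function
  have hreach : ∀ w : Γ, (cayley Γ S).edist 1 w ≠ ⊤ := fun w =>
    edist_ne_top_iff_reachable.mpr (cayley_reachable hgen hsymm hone w)
  have hDex : ∀ w : Γ, ∃ k : ℕ, (cayley Γ S).edist 1 w ≤ k := by
    intro w
    lift (cayley Γ S).edist 1 w to ℕ using hreach w with k hk
    exact ⟨k, le_refl _⟩
  choose D hD using hDex
  -- the limit functions
  set U : Ultrafilter ℕ := Filter.hyperfilter ℕ with hU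
  have htail : ∀ k : ℕ, {n : ℕ | k ≤ n} ∈ U := fun k =>
    Nat.hyperfilter_le_atTop (Filter.mem_atTop k)
  have hballmem : ∀ (w : Γ) (n : ℕ), D w ≤ n → w ∈ ballSet (cayley Γ S) 1 (r + n) := by
    intro w n hn
    exact le_trans (hD w) (by exact_mod_cast le_trans hn (Nat.le_add_left n r))
  set F : ℕ → Γ → Γ := fun n w =>
    if h : w ∈ ballSet (cayley Γ S) 1 (r + n) then ((φ n) ⟨w, h⟩ : Γ) else 1 with hF
  set F' : ℕ → Γ → Γ := fun n w =>
    if h : w ∈ ballSet (cayley Γ S) 1 (r + n) then ((φ n).symm ⟨w, h⟩ : Γ) else 1 with hF'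
  have hroot' : ∀ n, (φ n).symm (ballRoot (cayley Γ S) 1 (r + n)) =
      ballRoot (cayley Γ S) 1 (r + n) := by
    intro n
    conv_lhs => rw [← hroot n]
    exact (φ n).symm_apply_apply _
  have hFdist : ∀ n (w : Γ) (h : w ∈ ballSet (cayley Γ S) 1 (r + n)),
      (cayley Γ S).edist 1 (F n w) = (cayley Γ S).edist 1 w := by
    intro n w h
    rw [hF]; simp only [dif_pos h]
    exact aut_edist_root (cayley Γ S) 1 (r + n) (φ n) (hroot n) ⟨w, h⟩
  have hF'dist : ∀ n (w : Γ) (h : w ∈ ballSet (cayley Γ S) 1 (r + n)),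
      (cayley Γ S).edist 1 (F' n w) = (cayley Γ S).edist 1 w := by
    intro n w h
    rw [hF']; simp only [dif_pos h]
    exact aut_edist_root (cayley Γ S) 1 (r + n) (φ n).symm (hroot' n) ⟨w, h⟩
  -- extraction of ultrafilter limits
  have extract : ∀ (K : ℕ) (f : ℕ → Γ), {n | f n ∈ ballSet (cayley Γ S) 1 K} ∈ U →
      ∃ b, {n | f n = b} ∈ U := by
    intro K f hf
    have hfin' := ballSet_cayley_finite (S := S) hfin hsymm K
    have hsub : (⋃ b ∈ ballSet (cayley Γ S) 1 K, {n | f n = b}) ∈ U :=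
      Filter.mem_of_superset hf (fun n hn => Set.mem_biUnion hn rfl)
    obtain ⟨b, _, hb⟩ := (Ultrafilter.finite_biUnion_mem_iff hfin').mp hsub
    exact ⟨b, hb⟩
  have hFball : ∀ w : Γ, {n | F n w ∈ ballSet (cayley Γ S) 1 (D w)} ∈ U := by
    intro w
    refine Filter.mem_of_superset (htail (D w)) (fun n hn => ?_)
    have hm := hballmem w n hn
    show (cayley Γ S).edist 1 (F n w) ≤ (D w : ℕ∞)
    rw [hFdist n w hm]
    exact hD w
  have hF'ball : ∀ w : Γ, {n | F' n w ∈ ballSet (cayley Γ S) 1 (D w)} ∈ U := by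
    intro w
    refine Filter.mem_of_superset (htail (D w)) (fun n hn => ?_)
    have hm := hballmem w n hn
    show (cayley Γ S).edist 1 (F' n w) ≤ (D w : ℕ∞)
    rw [hF'dist n w hm]
    exact hD w
  choose ψ hψ using fun w => extract (D w) (fun n => F n w) (hFball w)
  choose ψ' hψ' using fun w => extract (D w) (fun n => F' n w) (hF'ball w)
  -- inverse properties
  have hFeq : ∀ (n : ℕ) (w : Γ) (h : w ∈ ballSet (cayley Γ S) 1 (r + n)),
      F n w = ((φ n) ⟨w, h⟩ : Γ) := fun n w h => by rw [hF]; simp only [dif_pos h]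
  have hF'eq : ∀ (n : ℕ) (w : Γ) (h : w ∈ ballSet (cayley Γ S) 1 (r + n)),
      F' n w = ((φ n).symm ⟨w, h⟩ : Γ) := fun n w h => by rw [hF']; simp only [dif_pos h]
  have hinv1 : ∀ w : Γ, ψ' (ψ w) = w := by
    intro w
    obtain ⟨n, ⟨hn1, hn2⟩, hn3⟩ := Filter.nonempty_of_mem
      (Filter.inter_mem (Filter.inter_mem (hψ w) (hψ' (ψ w))) (htail (D w)))
    have hm : w ∈ ballSet (cayley Γ S) 1 (r + n) := hballmem w n hn3
    have hψw : ψ w = ((φ n) ⟨w, hm⟩ : Γ) := by rw [← hn1]; exact hFeq n w hm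
    have hmψ : ψ w ∈ ballSet (cayley Γ S) 1 (r + n) := by rw [hψw]; exact ((φ n) ⟨w, hm⟩).2
    have : F' n (ψ w) = ((φ n).symm ⟨ψ w, hmψ⟩ : Γ) := hF'eq n (ψ w) hmψ
    rw [← hn2, this]
    have hsub : (⟨ψ w, hmψ⟩ : ballSet (cayley Γ S) 1 (r + n)) = (φ n) ⟨w, hm⟩ :=
      Subtype.ext hψw
    rw [hsub, (φ n).symm_apply_apply]
  have hinv2 : ∀ w : Γ, ψ (ψ' w) = w := by
    intro w
    obtain ⟨n, ⟨hn1, hn2⟩, hn3⟩ := Filter.nonempty_of_mem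
      (Filter.inter_mem (Filter.inter_mem (hψ' w) (hψ (ψ' w))) (htail (D w)))
    have hm : w ∈ ballSet (cayley Γ S) 1 (r + n) := hballmem w n hn3
    have hψw : ψ' w = ((φ n).symm ⟨w, hm⟩ : Γ) := by rw [← hn1]; exact hF'eq n w hm
    have hmψ : ψ' w ∈ ballSet (cayley Γ S) 1 (r + n) := by
      rw [hψw]; exact ((φ n).symm ⟨w, hm⟩).2
    have : F n (ψ' w) = ((φ n) ⟨ψ' w, hmψ⟩ : Γ) := hFeq n (ψ' w) hmψ
    rw [← hn2, this]
    have hsub : (⟨ψ' w, hmψ⟩ : ballSet (cayley Γ S) 1 (r + n)) = (φ n).symm ⟨w, hm⟩ :=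
      Subtype.ext hψw
    rw [hsub, (φ n).apply_symm_apply]
  -- adjacency preservation
  have hadj : ∀ w w' : Γ, (cayley Γ S).Adj (ψ w) (ψ w') ↔ (cayley Γ S).Adj w w' := by
    intro w w'
    obtain ⟨n, ⟨⟨hn1, hn2⟩, hn3⟩, hn4⟩ := Filter.nonempty_of_mem
      (Filter.inter_mem (Filter.inter_mem (Filter.inter_mem (hψ w) (hψ w'))
        (htail (D w))) (htail (D w')))
    have hm : w ∈ ballSet (cayley Γ S) 1 (r + n) := hballmem w n hn3
    have hm' : w' ∈ ballSet (cayley Γ S) 1 (r + n) := hballmem w' n hn4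
    have hψw : ψ w = ((φ n) ⟨w, hm⟩ : Γ) := by rw [← hn1]; exact hFeq n w hm
    have hψw' : ψ w' = ((φ n) ⟨w', hm'⟩ : Γ) := by rw [← hn2]; exact hFeq n w' hm'
    rw [hψw, hψw']
    calc (cayley Γ S).Adj ((φ n) ⟨w, hm⟩ : Γ) ((φ n) ⟨w', hm'⟩ : Γ)
        ↔ (ballGraph (cayley Γ S) 1 (r + n)).Adj ((φ n) ⟨w, hm⟩) ((φ n) ⟨w', hm'⟩) :=
          comap_adj.symm
      _ ↔ (ballGraph (cayley Γ S) 1 (r + n)).Adj ⟨w, hm⟩ ⟨w', hm'⟩ := (φ n).map_rel_iff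
      _ ↔ (cayley Γ S).Adj w w' := comap_adj
  -- the limit automorphism
  let Ψ : cayley Γ S ≃g cayley Γ S :=
    { toFun := ψ, invFun := ψ', left_inv := hinv1, right_inv := hinv2,
      map_rel_iff' := fun {a b} => hadj a b }
  have hΨ1 : Ψ 1 = 1 := by
    obtain ⟨n, hn⟩ := Filter.nonempty_of_mem (hψ 1)
    show ψ 1 = 1
    rw [← hn]
    have h1 : (1 : Γ) ∈ ballSet (cayley Γ S) 1 (r + n) := root_mem_ballSet _ _ _
    rw [hFeq n 1 h1]
    have : (⟨1, h1⟩ : ballSet (cayley Γ S) 1 (r + n)) = ballRoot (cayley Γ S) 1 (r + n) := rfl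
    rw [this, hroot n]
  have hfix := hreg Ψ 1 hΨ1
  -- find the moved element
  have hwitmem : {n : ℕ | wit n ∈ ballSet (cayley Γ S) 1 r} ∈ U := by
    refine Filter.mem_of_superset Filter.univ_mem (fun n _ => hwit1 n)
  have hsub : (⋃ b ∈ ballSet (cayley Γ S) 1 r, {n | wit n = b}) ∈ U :=
    Filter.mem_of_superset hwitmem (fun n hn => Set.mem_biUnion hn rfl)
  obtain ⟨w₀, hw₀mem, hw₀⟩ :=
    (Ultrafilter.finite_biUnion_mem_iff (ballSet_cayley_finite (S := S) hfin hsymm r)).mp hsub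
  obtain ⟨n, hn1, hn2⟩ := Filter.nonempty_of_mem (Filter.inter_mem hw₀ (hψ w₀))
  -- hn1 : wit n = w₀, hn2 : F n w₀ = ψ w₀
  have hmem : w₀ ∈ ballSet (cayley Γ S) 1 (r + n) := by
    have : (cayley Γ S).edist 1 w₀ ≤ r := hw₀mem
    exact le_trans this (by exact_mod_cast Nat.le_add_right r n)
  have hne : ψ w₀ ≠ w₀ := by
    rw [← hn2, hFeq n w₀ hmem]
    have heq : (⟨w₀, hmem⟩ : ballSet (cayley Γ S) 1 (r + n)) = ⟨wit n, hwit2 n⟩ :=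
      Subtype.ext hn1.symm
    rw [heq, ← hn1]
    exact hwit3 n
  exact hne (hfix w₀)
end

section
/- Let Γ be a finitely presented group with finite symmetric generating set S, 1 ∉ S, such that Cay(Γ,S) is automorphism-regular. Then there exists r ∈ ℕ such that every connected finite graph G₀, all of whose r-balls are rooted isomorphic to r-balls of Cay(Γ,S), is isomorphic to the Schreier graph Sch(Λ\Γ, S) for some finite-index subgroup Λ ≤ Γ. -/
open SimpleGraph

/-- `Γ` is finitely presented: it is isomorphic to a presented group on finitely many
generators with finitely many relators. -/
def IsFinitelyPresented (Γ : Type*) [Group Γ] : Prop :=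
  ∃ (n : ℕ) (rels : Set (FreeGroup (Fin n))), rels.Finite ∧
    Nonempty (Γ ≃* PresentedGroup rels)

namespace LGR
open SimpleGraph

variable {V W : Type*} {G : SimpleGraph V} {H : SimpleGraph W}

lemma edist_le_iff {u v : V} {n : ℕ} :
    G.edist u v ≤ (n : ℕ∞) ↔ ∃ p : G.Walk u v, p.length ≤ n := by
  constructor
  · intro h
    have hne : G.edist u v ≠ ⊤ := fun ht => by simp [ht] at h
    obtain ⟨p, hp⟩ := SimpleGraph.exists_walk_of_edist_ne_top hne
    refine ⟨p, ?_⟩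
    rw [← hp] at h
    exact_mod_cast h
  · rintro ⟨p, hp⟩
    exact le_trans (SimpleGraph.edist_le p) (by exact_mod_cast hp)

lemma edist_map_le (f : G →g H) (u v : V) : H.edist (f u) (f v) ≤ G.edist u v := by
  rcases eq_or_ne (G.edist u v) ⊤ with h | h
  · simp [h]
  · obtain ⟨p, hp⟩ := SimpleGraph.exists_walk_of_edist_ne_top h
    calc H.edist (f u) (f v) ≤ (p.map f).length := SimpleGraph.edist_le _
    _ = p.length := by simp
    _ = G.edist u v := hp

lemma iso_edist_eq (φ : G ≃g H) (u v : V) : H.edist (φ u) (φ v) = G.edist u v := by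
  refine le_antisymm (edist_map_le φ.toHom u v) ?_
  have := edist_map_le φ.symm.toHom (φ u) (φ v)
  simpa using this

lemma edist_le_induce {s : Set V} (u v : s) :
    G.edist ↑u ↑v ≤ (G.induce s).edist u v := by
  have := edist_map_le (SimpleGraph.Embedding.induce s (G := G)).toHom u v
  simpa using this

lemma exists_induce_walk {s : Set V} : ∀ {u v : V} (p : G.Walk u v)
    (_ : ∀ z ∈ p.support, z ∈ s) (hu : u ∈ s) (hv : v ∈ s),
    ∃ q : (G.induce s).Walk ⟨u, hu⟩ ⟨v, hv⟩, q.length = p.length := by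
  intro u v p
  induction p with
  | nil => intro _ hu hv; exact ⟨.nil, rfl⟩
  | @cons a b c h p ih =>
    intro hs ha hc
    have hb : b ∈ s := hs b (by simp)
    obtain ⟨q, hq⟩ := ih (fun z hz => hs z (by simp [hz])) hb hc
    exact ⟨.cons (by exact h : (G.induce s).Adj ⟨a, ha⟩ ⟨b, hb⟩) q, by exact congrArg (· + 1) hq⟩

/-- geodesic fitting: induced ball distance equals ambient distance when geodesic fits. -/
lemma induce_ball_edist_le {a x y : V} {r : ℕ}
    (hfit : G.edist a x + G.edist x y ≤ (r : ℕ∞)) (hx : x ∈ ballSet G a r) (hy : y ∈ ballSet G a r) :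
    (ballGraph G a r).edist ⟨x, hx⟩ ⟨y, hy⟩ ≤ G.edist x y := by
  classical
  have hxy : G.edist x y ≠ ⊤ := by
    intro ht
    rw [ht] at hfit
    simp at hfit
  obtain ⟨p, hp⟩ := SimpleGraph.exists_walk_of_edist_ne_top hxy
  have hsup : ∀ z ∈ p.support, z ∈ ballSet G a r := by
    intro z hz
    have h1 : G.edist x z ≤ (p.takeUntil z hz).length := SimpleGraph.edist_le _
    have h2 : ((p.takeUntil z hz).length : ℕ∞) ≤ p.length := by
      exact_mod_cast SimpleGraph.Walk.length_takeUntil_le p hz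
    have : G.edist a z ≤ G.edist a x + G.edist x z := SimpleGraph.edist_triangle
    refine le_trans this (le_trans ?_ hfit)
    exact add_le_add_right (le_trans h1 (h2.trans_eq hp)) _
  obtain ⟨q, hq⟩ := exists_induce_walk p hsup hx hy
  calc (ballGraph G a r).edist ⟨x, hx⟩ ⟨y, hy⟩ ≤ q.length := SimpleGraph.edist_le _
  _ = p.length := by exact_mod_cast hq
  _ = G.edist x y := hp

lemma ball_edist_root (a : V) (r : ℕ) (x : ballSet G a r) :
    (ballGraph G a r).edist (ballRoot G a r) x = G.edist a ↑x := by
  refine le_antisymm ?_ (edist_le_induce _ _)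
  have hfit : G.edist a a + G.edist a ↑x ≤ (r : ℕ∞) := by
    rw [SimpleGraph.edist_self, zero_add]; exact x.2
  simpa using induce_ball_edist_le hfit (root_mem_ballSet G a r) x.2

/-- rooted ball isos preserve distance to the root. -/
lemma rooted_iso_edist_root {a : V} {b : W} {r : ℕ}
    (F : ballGraph G a r ≃g ballGraph H b r) (hF : F (ballRoot G a r) = ballRoot H b r)
    (x : ballSet G a r) : H.edist b ↑(F x) = G.edist a ↑x := by
  rw [← ball_edist_root (G := G) a r x, ← ball_edist_root (G := H) b r (F x), ← hF]
  exact iso_edist_eq F _ _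

lemma rooted_iso_edist_le {a : V} {b : W} {r : ℕ}
    (F : ballGraph G a r ≃g ballGraph H b r) (hF : F (ballRoot G a r) = ballRoot H b r)
    (x y : ballSet G a r) (hfit : G.edist a ↑x + G.edist ↑x ↑y ≤ (r : ℕ∞)) :
    H.edist ↑(F x) ↑(F y) ≤ G.edist ↑x ↑y := by
  calc H.edist ↑(F x) ↑(F y) ≤ (ballGraph H b r).edist (F x) (F y) := edist_le_induce _ _
  _ = (ballGraph G a r).edist x y := iso_edist_eq F x y
  _ ≤ G.edist ↑x ↑y := induce_ball_edist_le hfit x.2 y.2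

/-- rooted ball isos preserve distances between points, provided a geodesic fits. -/
lemma rooted_iso_edist {a : V} {b : W} {r : ℕ}
    (F : ballGraph G a r ≃g ballGraph H b r) (hF : F (ballRoot G a r) = ballRoot H b r)
    (x y : ballSet G a r) (hfit : G.edist a ↑x + G.edist ↑x ↑y ≤ (r : ℕ∞)) :
    H.edist ↑(F x) ↑(F y) = G.edist ↑x ↑y := by
  refine le_antisymm (rooted_iso_edist_le F hF x y hfit) ?_
  have hsymmroot : F.symm (ballRoot H b r) = ballRoot G a r := by
    rw [← hF]; exact F.symm_apply_apply _
  have hfit' : H.edist b ↑(F x) + H.edist ↑(F x) ↑(F y) ≤ (r : ℕ∞) := by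
    have h1 : H.edist b ↑(F x) = G.edist a ↑x := rooted_iso_edist_root F hF x
    have h2 : H.edist ↑(F x) ↑(F y) ≤ G.edist ↑x ↑y := rooted_iso_edist_le F hF x y hfit
    calc H.edist b ↑(F x) + H.edist ↑(F x) ↑(F y) ≤ G.edist a ↑x + G.edist ↑x ↑y := by
          rw [h1]; exact add_le_add_right h2 _
    _ ≤ (r : ℕ∞) := hfit
  have h3 := rooted_iso_edist_le F.symm hsymmroot (F x) (F y) hfit'
  simpa using h3

section Cayley

variable {Γ : Type*} [Group Γ] {S : Set Γ}

lemma mem_S_inv (hsymm : S⁻¹ = S) {s : Γ} : s⁻¹ ∈ S ↔ s ∈ S := by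
  constructor
  · intro h; rw [← hsymm]; simpa using h
  · intro h; rw [← hsymm] at h; simpa using h

lemma cayley_adj (hsymm : S⁻¹ = S) {g h : Γ} :
    (cayley Γ S).Adj g h ↔ g ≠ h ∧ g⁻¹ * h ∈ S := by
  constructor
  · rintro ⟨hne, hs | hs⟩
    · exact ⟨hne, hs⟩
    · refine ⟨hne, ?_⟩
      have := (mem_S_inv hsymm).mpr hs
      simpa using this
  · rintro ⟨hne, hs⟩; exact ⟨hne, Or.inl hs⟩

lemma cayley_adj_mul (hsymm : S⁻¹ = S) (hone : (1 : Γ) ∉ S) {g s : Γ} (hs : s ∈ S) :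
    (cayley Γ S).Adj g (g * s) := by
  rw [cayley_adj hsymm]
  constructor
  · intro h
    apply hone
    have : s = 1 := by
      have := mul_left_cancel (a := g) (by simpa using h.symm : g * s = g * 1)
      exact this
    rwa [this] at hs
  · simpa using hs

/-- Left translation as a graph automorphism of the Cayley graph. -/
def leftMul (γ : Γ) : cayley Γ S ≃g cayley Γ S where
  toEquiv := Equiv.mulLeft γ
  map_rel_iff' := by
    intro a b
    show (cayley Γ S).Adj (γ * a) (γ * b) ↔ (cayley Γ S).Adj a b
    unfold cayley
    simp [mul_assoc]

lemma cayley_edist_mul (γ x y : Γ) :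
    (cayley Γ S).edist (γ * x) (γ * y) = (cayley Γ S).edist x y := by
  have := LGR.iso_edist_eq (leftMul (S := S) γ) x y
  simpa [leftMul] using this

lemma walk_to_word (hsymm : S⁻¹ = S) : ∀ {u v : Γ} (p : (cayley Γ S).Walk u v),
    ∃ l : List Γ, (∀ s ∈ l, s ∈ S) ∧ l.length = p.length ∧ u * l.prod = v := by
  intro u v p
  induction p with
  | nil => exact ⟨[], by simp, by simp, by simp⟩
  | @cons a b c h p ih =>
    obtain ⟨l, hl, hlen, hprod⟩ := ih
    obtain ⟨hne, hs⟩ := (cayley_adj hsymm).mp h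
    refine ⟨(a⁻¹ * b) :: l, ?_, by simp [hlen], ?_⟩
    · intro s hsl
      rcases List.mem_cons.mp hsl with h1 | h1
      · rwa [h1]
      · exact hl s h1
    · rw [List.prod_cons, ← mul_assoc]
      simpa [mul_assoc] using hprod

lemma word_to_walk (hsymm : S⁻¹ = S) (hone : (1 : Γ) ∉ S) :
    ∀ (l : List Γ) (u : Γ), (∀ s ∈ l, s ∈ S) →
    ∃ p : (cayley Γ S).Walk u (u * l.prod), p.length = l.length := by
  intro l
  induction l with
  | nil => intro u _; exact ⟨SimpleGraph.Walk.nil.copy rfl (by simp), by rw [SimpleGraph.Walk.length_copy]; rfl⟩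
  | cons s l ih =>
    intro u hl
    have hs : s ∈ S := hl s (by simp)
    obtain ⟨p, hp⟩ := ih (u * s) (fun t ht => hl t (by simp [ht]))
    have hadj : (cayley Γ S).Adj u (u * s) := cayley_adj_mul hsymm hone hs
    refine ⟨(SimpleGraph.Walk.cons hadj p).copy rfl (by rw [List.prod_cons, mul_assoc]), ?_⟩
    rw [SimpleGraph.Walk.length_copy, SimpleGraph.Walk.length_cons, hp, List.length_cons]

lemma edist_one_le_iff (hsymm : S⁻¹ = S) (hone : (1 : Γ) ∉ S) {g : Γ} {n : ℕ} :
    (cayley Γ S).edist 1 g ≤ (n : ℕ∞) ↔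
      ∃ l : List Γ, (∀ s ∈ l, s ∈ S) ∧ l.length ≤ n ∧ l.prod = g := by
  rw [LGR.edist_le_iff]
  constructor
  · rintro ⟨p, hp⟩
    obtain ⟨l, hl, hlen, hprod⟩ := walk_to_word hsymm p
    exact ⟨l, hl, hlen ▸ hp, by simpa using hprod⟩
  · rintro ⟨l, hl, hlen, hprod⟩
    obtain ⟨p, hp⟩ := word_to_walk hsymm hone l 1 hl
    exact ⟨p.copy rfl (by simp [hprod]), by simp [hp, hlen]⟩

lemma edist_prod_le_length (hsymm : S⁻¹ = S) (hone : (1 : Γ) ∉ S) {l : List Γ}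
    (hl : ∀ s ∈ l, s ∈ S) : (cayley Γ S).edist 1 l.prod ≤ (l.length : ℕ∞) :=
  (edist_one_le_iff hsymm hone).mpr ⟨l, hl, le_refl _, rfl⟩

lemma exists_word (hgen : Subgroup.closure S = ⊤) (hsymm : S⁻¹ = S) (g : Γ) :
    ∃ l : List Γ, (∀ s ∈ l, s ∈ S) ∧ l.prod = g := by
  have hg : g ∈ Subgroup.closure S := by rw [hgen]; trivial
  induction hg using Subgroup.closure_induction with
  | mem x hx => exact ⟨[x], by simpa using hx, by simp⟩
  | one => exact ⟨[], by simp, by simp⟩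
  | mul x y _ _ hx hy =>
    obtain ⟨l1, hl1, hp1⟩ := hx
    obtain ⟨l2, hl2, hp2⟩ := hy
    refine ⟨l1 ++ l2, ?_, by simp [hp1, hp2]⟩
    intro s hs
    rcases List.mem_append.mp hs with h | h
    · exact hl1 s h
    · exact hl2 s h
  | inv x _ hx =>
    obtain ⟨l, hl, hp⟩ := hx
    refine ⟨(l.map (·⁻¹)).reverse, ?_, by rw [← hp, ← List.prod_inv_reverse]⟩
    intro s hs
    simp only [List.mem_reverse, List.mem_map] at hs
    obtain ⟨t, ht, rfl⟩ := hs
    exact (mem_S_inv hsymm).mpr (hl t ht)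

lemma cayley_edist_ne_top (hgen : Subgroup.closure S = ⊤) (hsymm : S⁻¹ = S)
    (hone : (1 : Γ) ∉ S) (x y : Γ) : (cayley Γ S).edist x y ≠ ⊤ := by
  obtain ⟨l, hl, hp⟩ := exists_word hgen hsymm (x⁻¹ * y)
  have h1 : (cayley Γ S).edist 1 (x⁻¹ * y) ≤ (l.length : ℕ∞) :=
    (edist_one_le_iff hsymm hone).mpr ⟨l, hl, le_refl _, hp⟩
  have h2 : (cayley Γ S).edist x y = (cayley Γ S).edist 1 (x⁻¹ * y) := by
    have := cayley_edist_mul (S := S) x⁻¹ x y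
    simpa using this.symm
  rw [h2]
  exact ne_top_of_le_ne_top (by simp) h1

lemma ball_finite (hfin : S.Finite) (hsymm : S⁻¹ = S) (hone : (1 : Γ) ∉ S) (n : ℕ) :
    {g : Γ | (cayley Γ S).edist 1 g ≤ (n : ℕ∞)}.Finite := by
  induction n with
  | zero =>
    refine Set.Finite.subset (Set.finite_singleton 1) ?_
    intro g hg
    simp only [Set.mem_setOf_eq, Nat.cast_zero] at hg
    have h0 : (cayley Γ S).edist 1 g = 0 := le_antisymm hg zero_le
    have := SimpleGraph.edist_eq_zero_iff.mp h0
    simp [this.symm]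
  | succ n ih =>
    refine Set.Finite.subset (ih.union (ih.mul hfin)) ?_
    intro g hg
    simp only [Set.mem_setOf_eq] at hg
    obtain ⟨l, hl, hlen, hprod⟩ := (edist_one_le_iff hsymm hone).mp hg
    rcases List.eq_nil_or_concat l with rfl | ⟨l', s, rfl⟩
    · simp only [List.prod_nil] at hprod
      left
      simp [Set.mem_setOf_eq, ← hprod, SimpleGraph.edist_self]
    · right
      have hs : s ∈ S := hl s (by simp)
      have hl' : ∀ t ∈ l', t ∈ S := fun t ht => hl t (by simp [ht])
      have hlen' : l'.length ≤ n := by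
        simp only [List.length_concat] at hlen
        omega
      refine ⟨l'.prod, ?_, s, hs, ?_⟩
      · exact (edist_one_le_iff hsymm hone).mpr ⟨l', hl', hlen', rfl⟩
      · simp [← hprod]

end Cayley

section Rigidity

variable {Γ : Type*} [Group Γ] {S : Set Γ}

/-- A partial isomorphism of the ball of radius `r` about `1` in the Cayley graph,
recorded as a bare function `Γ → Γ`. -/
def IsPartialIso (S : Set Γ) (r : ℕ) (f : Γ → Γ) : Prop :=
  (∀ x, (cayley Γ S).edist 1 x ≤ (r : ℕ∞) →
    (cayley Γ S).edist 1 (f x) = (cayley Γ S).edist 1 x) ∧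
  (∀ x y, (cayley Γ S).edist 1 x ≤ (r : ℕ∞) → (cayley Γ S).edist 1 y ≤ (r : ℕ∞) →
    ((cayley Γ S).Adj x y ↔ (cayley Γ S).Adj (f x) (f y))) ∧
  (∀ x y, (cayley Γ S).edist 1 x ≤ (r : ℕ∞) → (cayley Γ S).edist 1 y ≤ (r : ℕ∞) →
    f x = f y → x = y) ∧
  (∀ y, (cayley Γ S).edist 1 y ≤ (r : ℕ∞) →
    ∃ x, (cayley Γ S).edist 1 x ≤ (r : ℕ∞) ∧ f x = y)

lemma isPartialIso_mono {r m : ℕ} {f : Γ → Γ} (h : IsPartialIso S r f) (hm : m ≤ r) :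
    IsPartialIso S m f := by
  obtain ⟨h1, h2, h3, h4⟩ := h
  have hcast : (m : ℕ∞) ≤ (r : ℕ∞) := by exact_mod_cast hm
  refine ⟨fun x hx => h1 x (hx.trans hcast),
    fun x y hx hy => h2 x y (hx.trans hcast) (hy.trans hcast),
    fun x y hx hy => h3 x y (hx.trans hcast) (hy.trans hcast),
    fun y hy => ?_⟩
  obtain ⟨x, hx, hfx⟩ := h4 y (hy.trans hcast)
  refine ⟨x, ?_, hfx⟩
  have := h1 x hx
  rw [hfx] at this
  rw [← this]
  exact hy

lemma ultra_limit {α : Type*} (U : Ultrafilter ℕ) (u : ℕ → α) {T : Set α} (hT : T.Finite)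
    (h : {r | u r ∈ T} ∈ U) : ∃ a ∈ T, {r | u r = a} ∈ U := by
  by_contra hc
  push_neg at hc
  have hcompl : ∀ a ∈ T, {r | u r = a}ᶜ ∈ U := fun a ha =>
    (Ultrafilter.compl_mem_iff_notMem).mpr (hc a ha)
  have hint : (⋂ a ∈ T, {r | u r = a}ᶜ) ∈ U := (Filter.biInter_mem hT).mpr hcompl
  obtain ⟨r, hr1, hr2⟩ := Filter.nonempty_of_mem (Filter.inter_mem h hint)
  simp only [Set.mem_iInter, Set.mem_compl_iff, Set.mem_setOf_eq] at hr2
  exact hr2 (u r) hr1 rfl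

lemma ultra_unique {α : Type*} (U : Ultrafilter ℕ) (u : ℕ → α) {a b : α}
    (ha : {r | u r = a} ∈ U) (hb : {r | u r = b} ∈ U) : a = b := by
  obtain ⟨r, hr1, hr2⟩ := Filter.nonempty_of_mem (Filter.inter_mem ha hb)
  rw [← hr1, ← hr2]

lemma mem_hyper_ge (n : ℕ) : {r : ℕ | n ≤ r} ∈ (Filter.hyperfilter ℕ : Ultrafilter ℕ) := by
  apply Filter.mem_hyperfilter_of_finite_compl
  have : {r : ℕ | n ≤ r}ᶜ = {r | r < n} := by ext r; simp
  rw [this]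
  exact Set.finite_lt_nat n

lemma rigidity (hfin : S.Finite) (hgen : Subgroup.closure S = ⊤) (hsymm : S⁻¹ = S)
    (hone : (1 : Γ) ∉ S)
    (hreg : ∀ φ : cayley Γ S ≃g cayley Γ S, ∀ v : Γ, φ v = v → ∀ w : Γ, φ w = w) :
    ∃ r₁ : ℕ, ∀ f : Γ → Γ, IsPartialIso S r₁ f →
      ∀ x : Γ, (cayley Γ S).edist 1 x ≤ (1 : ℕ∞) → f x = x := by
  by_contra hc
  push_neg at hc
  have hc' : ∀ r : ℕ, ∃ f : Γ → Γ, IsPartialIso S r f ∧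
      ∃ x, (cayley Γ S).edist 1 x ≤ (1 : ℕ∞) ∧ f x ≠ x := by
    intro r
    obtain ⟨f, hf, x, hx, hne⟩ := hc r
    exact ⟨f, hf, x, hx, hne⟩
  choose f hpi xx hxx hxxne using hc'
  set Cay := cayley Γ S with hCay
  set U : Ultrafilter ℕ := Filter.hyperfilter ℕ with hU
  -- finite distances
  have hdist : ∀ x : Γ, ∃ n : ℕ, Cay.edist 1 x ≤ (n : ℕ∞) := by
    intro x
    have := cayley_edist_ne_top hgen hsymm hone (1 : Γ) x
    exact ⟨(Cay.edist 1 x).toNat, le_of_eq (ENat.coe_toNat this).symm⟩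
  choose nn hnn using hdist
  have hball : ∀ n : ℕ, {g : Γ | Cay.edist 1 g ≤ (n : ℕ∞)}.Finite :=
    fun n => ball_finite hfin hsymm hone n
  -- limit function φ
  have hlim : ∀ x : Γ, ∃ a, {r | f r x = a} ∈ U := by
    intro x
    have hmem : {r | f r x ∈ {g : Γ | Cay.edist 1 g ≤ ((nn x : ℕ) : ℕ∞)}} ∈ U := by
      refine Filter.mem_of_superset (mem_hyper_ge (nn x)) ?_
      intro r hr
      simp only [Set.mem_setOf_eq] at hr ⊢
      have hxr : Cay.edist 1 x ≤ (r : ℕ∞) := (hnn x).trans (by exact_mod_cast hr)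
      have := (hpi r).1 x hxr
      rw [this]
      exact hnn x
    obtain ⟨a, _, ha⟩ := ultra_limit U (fun r => f r x) (hball (nn x)) hmem
    exact ⟨a, ha⟩
  choose φ hφ using hlim
  -- preimage function
  have hpre : ∀ (r : ℕ) (y : Γ), ∃ x, Cay.edist 1 y ≤ (r : ℕ∞) →
      Cay.edist 1 x ≤ (r : ℕ∞) ∧ f r x = y := by
    intro r y
    by_cases h : Cay.edist 1 y ≤ (r : ℕ∞)
    · obtain ⟨x, hx1, hx2⟩ := (hpi r).2.2.2 y h
      exact ⟨x, fun _ => ⟨hx1, hx2⟩⟩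
    · exact ⟨1, fun hy => absurd hy h⟩
  choose g hg using hpre
  have hlim' : ∀ y : Γ, ∃ a, {r | g r y = a} ∈ U := by
    intro y
    have hmem : {r | g r y ∈ {x : Γ | Cay.edist 1 x ≤ ((nn y : ℕ) : ℕ∞)}} ∈ U := by
      refine Filter.mem_of_superset (mem_hyper_ge (nn y)) ?_
      intro r hr
      simp only [Set.mem_setOf_eq] at hr ⊢
      have hyr : Cay.edist 1 y ≤ (r : ℕ∞) := (hnn y).trans (by exact_mod_cast hr)
      obtain ⟨hg1, hg2⟩ := hg r y hyr
      have := (hpi r).1 _ hg1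
      rw [hg2] at this
      rw [← this]
      exact hnn y
    obtain ⟨a, _, ha⟩ := ultra_limit U (fun r => g r y) (hball (nn y)) hmem
    exact ⟨a, ha⟩
  choose ψ hψ using hlim'
  -- left inverse
  have hleft : ∀ x, ψ (φ x) = x := by
    intro x
    have hs : {r | f r x = φ x} ∩ {r | g r (φ x) = ψ (φ x)} ∩
        {r | max (nn x) (nn (φ x)) ≤ r} ∈ U :=
      Filter.inter_mem (Filter.inter_mem (hφ x) (hψ (φ x))) (mem_hyper_ge _)
    obtain ⟨r, ⟨hr1, hr2⟩, hr3⟩ := Filter.nonempty_of_mem hs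
    simp only [Set.mem_setOf_eq] at hr1 hr2 hr3
    have hxr : Cay.edist 1 x ≤ (r : ℕ∞) :=
      (hnn x).trans (by exact_mod_cast le_trans (le_max_left _ _) hr3)
    have hφxr : Cay.edist 1 (φ x) ≤ (r : ℕ∞) :=
      (hnn (φ x)).trans (by exact_mod_cast le_trans (le_max_right _ _) hr3)
    obtain ⟨hg1, hg2⟩ := hg r (φ x) hφxr
    have : g r (φ x) = x := by
      apply (hpi r).2.2.1 _ _ hg1 hxr
      rw [hg2, hr1]
    rw [← hr2, this]
  -- right inverse
  have hright : ∀ y, φ (ψ y) = y := by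
    intro y
    have hs : {r | g r y = ψ y} ∩ {r | f r (ψ y) = φ (ψ y)} ∩ {r | nn y ≤ r} ∈ U :=
      Filter.inter_mem (Filter.inter_mem (hψ y) (hφ (ψ y))) (mem_hyper_ge _)
    obtain ⟨r, ⟨hr1, hr2⟩, hr3⟩ := Filter.nonempty_of_mem hs
    simp only [Set.mem_setOf_eq] at hr1 hr2 hr3
    have hyr : Cay.edist 1 y ≤ (r : ℕ∞) := (hnn y).trans (by exact_mod_cast hr3)
    obtain ⟨hg1, hg2⟩ := hg r y hyr
    rw [← hr2, ← hr1, hg2]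
  -- adjacency
  have hadj : ∀ x y, Cay.Adj (φ x) (φ y) ↔ Cay.Adj x y := by
    intro x y
    have hs : {r | f r x = φ x} ∩ {r | f r y = φ y} ∩ {r | max (nn x) (nn y) ≤ r} ∈ U :=
      Filter.inter_mem (Filter.inter_mem (hφ x) (hφ y)) (mem_hyper_ge _)
    obtain ⟨r, ⟨hr1, hr2⟩, hr3⟩ := Filter.nonempty_of_mem hs
    simp only [Set.mem_setOf_eq] at hr1 hr2 hr3
    have hxr : Cay.edist 1 x ≤ (r : ℕ∞) :=
      (hnn x).trans (by exact_mod_cast le_trans (le_max_left _ _) hr3)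
    have hyr : Cay.edist 1 y ≤ (r : ℕ∞) :=
      (hnn y).trans (by exact_mod_cast le_trans (le_max_right _ _) hr3)
    rw [← hr1, ← hr2]
    exact ((hpi r).2.1 x y hxr hyr).symm
  -- the iso
  set Φ : Cay ≃g Cay := ⟨⟨φ, ψ, hleft, hright⟩, by intro a b; exact hadj a b⟩ with hΦ
  have hΦ1 : Φ 1 = 1 := by
    have h1 : {r | f r 1 = φ 1} ∈ U := hφ 1
    have h2 : {r : ℕ | f r 1 = 1} ∈ U := by
      have : ∀ r : ℕ, f r 1 = 1 := by
        intro r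
        have h0 : Cay.edist 1 (1 : Γ) ≤ (r : ℕ∞) := by simp [SimpleGraph.edist_self]
        have := (hpi r).1 1 h0
        simp only [SimpleGraph.edist_self] at this
        exact (SimpleGraph.edist_eq_zero_iff.mp this).symm
      exact Filter.univ_mem' this
    exact ultra_unique U (fun r => f r 1) h1 h2
  have hid : ∀ w, φ w = w := hreg Φ 1 hΦ1
  -- contradiction: find a point where φ is not the identity
  have hmem : {r | (xx r, f r (xx r)) ∈
      ({g : Γ | Cay.edist 1 g ≤ ((1:ℕ) : ℕ∞)} ×ˢ {g : Γ | Cay.edist 1 g ≤ ((1:ℕ) : ℕ∞)})} ∈ U := by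
    refine Filter.mem_of_superset (mem_hyper_ge 1) ?_
    intro r hr
    simp only [Set.mem_setOf_eq, Set.mem_prod] at hr ⊢
    have hx1 : Cay.edist 1 (xx r) ≤ ((1:ℕ) : ℕ∞) := by exact_mod_cast hxx r
    have hxr : Cay.edist 1 (xx r) ≤ (r : ℕ∞) := hx1.trans (by exact_mod_cast hr)
    refine ⟨hx1, ?_⟩
    have := (hpi r).1 _ hxr
    rw [this]
    exact hx1
  obtain ⟨⟨a, b⟩, _, hab⟩ := ultra_limit U (fun r => (xx r, f r (xx r)))
    (((hball 1).prod (hball 1))) hmem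
  have hane : a ≠ b := by
    obtain ⟨r, hr⟩ := Filter.nonempty_of_mem hab
    simp only [Set.mem_setOf_eq, Prod.mk.injEq] at hr
    intro h
    exact hxxne r (by rw [hr.2, hr.1, ← h])
  have hφa : φ a = b := by
    have h1 : {r | f r a = φ a} ∈ U := hφ a
    have h2 : {r | f r a = b} ∈ U := by
      refine Filter.mem_of_superset hab ?_
      intro r hr
      simp only [Set.mem_setOf_eq, Prod.mk.injEq] at hr ⊢
      rw [← hr.1, hr.2]
    exact ultra_unique U (fun r => f r a) h1 h2
  rw [hid a] at hφa
  exact hane hφa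

end Rigidity


section Presentation

variable {Γ : Type*} [Group Γ] {S : Set Γ}

/-- The evaluation map from the free group on (the type underlying) `S` to `Γ`. -/
noncomputable def piS (S : Set Γ) : FreeGroup S →* Γ := FreeGroup.lift Subtype.val

@[simp] lemma piS_of (s : S) : piS S (FreeGroup.of s) = ↑s := FreeGroup.lift_apply_of

lemma piS_surjective (hgen : Subgroup.closure S = ⊤) : Function.Surjective (piS S) := by
  have h : (piS S).range = ⊤ := by
    rw [piS, FreeGroup.range_lift_eq_closure, Subtype.range_coe, hgen]
  exact MonoidHom.range_eq_top.mp h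

lemma presentation_transport (hfp : IsFinitelyPresented Γ) (hfin : S.Finite)
    (hgen : Subgroup.closure S = ⊤) :
    ∃ T : Set (FreeGroup S), T.Finite ∧ Subgroup.normalClosure T = (piS S).ker := by
  classical
  obtain ⟨n, rels, hrels, ⟨e⟩⟩ := hfp
  set proj : FreeGroup (Fin n) →* PresentedGroup rels := QuotientGroup.mk' _ with hproj
  have hprojsurj : Function.Surjective proj := QuotientGroup.mk'_surjective _
  have hπsurj : Function.Surjective (piS S) := piS_surjective hgen
  -- lift of generators
  have hβex : ∀ s : S, ∃ x : FreeGroup (Fin n), proj x = e ↑s := fun s => hprojsurj _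
  choose β0 hβ0 using hβex
  set β : FreeGroup S →* FreeGroup (Fin n) := FreeGroup.lift β0 with hβ
  have hαex : ∀ i : Fin n, ∃ w : FreeGroup S, piS S w = e.symm (proj (FreeGroup.of i)) :=
    fun i => hπsurj _
  choose α0 hα0 using hαex
  set α : FreeGroup (Fin n) →* FreeGroup S := FreeGroup.lift α0 with hα
  -- key commutation identities
  have hcomm1 : ∀ x : FreeGroup S, proj (β x) = e (piS S x) := by
    have : proj.comp β = (e.toMonoidHom).comp (piS S) := by
      apply FreeGroup.ext_hom
      intro s
      simp [hβ, FreeGroup.lift_apply_of, hβ0 s, piS]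
    intro x
    exact DFunLike.congr_fun this x
  have hcomm2 : ∀ y : FreeGroup (Fin n), piS S (α y) = e.symm (proj y) := by
    have : (piS S).comp α = (e.symm.toMonoidHom).comp proj := by
      apply FreeGroup.ext_hom
      intro i
      simp [hα, FreeGroup.lift_apply_of, hα0 i]
    intro y
    exact DFunLike.congr_fun this y
  set T : Set (FreeGroup S) :=
    (α '' rels) ∪ (Set.range fun s : S => FreeGroup.of s * (α (β (FreeGroup.of s)))⁻¹) with hT
  have hTfin : T.Finite := by
    apply Set.Finite.union
    · exact hrels.image _
    · haveI : Finite S := hfin.to_subtype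
      exact Set.finite_range _
  refine ⟨T, hTfin, ?_⟩
  have hTker : T ⊆ (piS S).ker := by
    rintro t (⟨ρ, hρ, rfl⟩ | ⟨s, rfl⟩)
    · rw [SetLike.mem_coe, MonoidHom.mem_ker]
      rw [hcomm2]
      have : proj ρ = 1 := by
        have hmem : ρ ∈ Subgroup.normalClosure rels := Subgroup.subset_normalClosure hρ
        exact (QuotientGroup.eq_one_iff ρ).mpr hmem
      rw [this]
      simp
    · rw [SetLike.mem_coe, MonoidHom.mem_ker]
      rw [map_mul, map_inv, hcomm2, hcomm1]
      simp [piS]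
  refine le_antisymm (Subgroup.normalClosure_le_normal hTker) ?_
  -- reverse inclusion
  intro x hx
  rw [MonoidHom.mem_ker] at hx
  set M := Subgroup.normalClosure T with hM
  set q : FreeGroup S →* FreeGroup S ⧸ M := QuotientGroup.mk' M with hq
  have hqαβ : ∀ w : FreeGroup S, q (α (β w)) = q w := by
    have : q.comp (α.comp β) = q := by
      apply FreeGroup.ext_hom
      intro s
      have hmem : FreeGroup.of s * (α (β (FreeGroup.of s)))⁻¹ ∈ M :=
        Subgroup.subset_normalClosure (Or.inr ⟨s, rfl⟩)
      have : q (FreeGroup.of s * (α (β (FreeGroup.of s)))⁻¹) = 1 := by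
        exact (QuotientGroup.eq_one_iff _).mpr hmem
      rw [map_mul, map_inv] at this
      simp only [MonoidHom.comp_apply]
      exact (mul_inv_eq_one.mp this).symm
    intro w
    exact DFunLike.congr_fun this w
  have hβx : β x ∈ Subgroup.normalClosure rels := by
    have h1 : proj (β x) = 1 := by rw [hcomm1, hx, map_one]
    exact (QuotientGroup.eq_one_iff (β x)).mp h1
  have hαβx : α (β x) ∈ M := by
    have hle : Subgroup.normalClosure rels ≤ Subgroup.comap α M := by
      haveI : (Subgroup.comap α M).Normal := Subgroup.Normal.comap (by infer_instance) α
      apply Subgroup.normalClosure_le_normal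
      intro ρ hρ
      rw [SetLike.mem_coe, Subgroup.mem_comap]
      apply Subgroup.subset_normalClosure
      exact Or.inl ⟨ρ, hρ, rfl⟩
    exact Subgroup.mem_comap.mp (hle hβx)
  have hqx : q x = 1 := by
    rw [← hqαβ x]
    exact (QuotientGroup.eq_one_iff _).mpr hαβx
  have : x ∈ MonoidHom.ker q := MonoidHom.mem_ker.mpr hqx
  rwa [hq, QuotientGroup.ker_mk'] at this

end Presentation


section Schreier

variable {Γ : Type*} [Group Γ] {S : Set Γ}

lemma schreier_model (hgen : Subgroup.closure S = ⊤) (hsymm : S⁻¹ = S)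
    {V : Type} [Fintype V] {G₀ : SimpleGraph V} (hconn : G₀.Connected)
    (T : Set (FreeGroup S)) (hTker : Subgroup.normalClosure T = (piS S).ker)
    (K : ℕ) (hTlen : ∀ t ∈ T, ∃ L : List (S × Bool), FreeGroup.mk L = t ∧ L.length ≤ K)
    (next : V → Γ → V)
    (hN1 : ∀ (v : V) (s : Γ), s ∈ S → G₀.Adj v (next v s))
    (hN2 : ∀ (v : V) (s : Γ), s ∈ S → next (next v s) s⁻¹ = v)
    (hN3 : ∀ (v : V) (y : V), G₀.Adj v y → ∃ s ∈ S, y = next v s)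
    (hN4 : ∀ (v : V) (l : List Γ), (∀ s ∈ l, s ∈ S) → l.length ≤ K → l.prod = 1 →
      l.foldl next v = v) :
    ∃ Λ : Subgroup Γ, Λ.FiniteIndex ∧ Nonempty (G₀ ≃g schreier Λ S) := by
  classical
  -- the permutation attached to each generator
  have hN2' : ∀ (v : V) (s : Γ), s ∈ S → next (next v s⁻¹) s = v := by
    intro v s hs
    have := hN2 v s⁻¹ ((mem_S_inv hsymm).mpr hs)
    rwa [inv_inv] at this
  set σ : S → Equiv.Perm V := fun s =>
    ⟨fun v => next v ↑s, fun v => next v (↑s)⁻¹,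
      fun v => hN2 v ↑s s.2, fun v => hN2' v ↑s s.2⟩ with hσ
  set μ : FreeGroup S →* (Equiv.Perm V)ᵐᵒᵖ :=
    FreeGroup.lift (fun s => MulOpposite.op (σ s)) with hμ
  -- computing μ on words
  have hcompute : ∀ (L : List (S × Bool)) (v : V),
      (μ (FreeGroup.mk L)).unop v
        = (L.map (fun x => cond x.2 (↑x.1 : Γ) (↑x.1 : Γ)⁻¹)).foldl next v := by
    intro L
    induction L with
    | nil =>
      intro v
      have h1 : FreeGroup.mk ([] : List (S × Bool)) = 1 := rfl
      rw [h1, map_one]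
      rfl
    | cons x L ih =>
      intro v
      have h1 : FreeGroup.mk (x :: L) = FreeGroup.mk [x] * FreeGroup.mk L := by
        rw [FreeGroup.mul_mk]; rfl
      rw [h1, map_mul, MulOpposite.unop_mul, Equiv.Perm.mul_apply]
      have h2 : (μ (FreeGroup.mk [x])).unop v = next v (cond x.2 (↑x.1 : Γ) (↑x.1 : Γ)⁻¹) := by
        rcases x with ⟨s, b⟩
        cases b
        · have hof : (FreeGroup.of s : FreeGroup S) = FreeGroup.mk [(s, true)] := rfl
          have h3 : (FreeGroup.of s : FreeGroup S)⁻¹ = FreeGroup.mk [((s : S), false)] := by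
            rw [hof, FreeGroup.inv_mk]
            simp [FreeGroup.invRev]
          rw [← h3, map_inv]
          have h4 : μ (FreeGroup.of s) = MulOpposite.op (σ s) := FreeGroup.lift_apply_of
          rw [h4]
          rfl
        · have h3 : FreeGroup.mk [((s : S), true)] = FreeGroup.of s := rfl
          rw [h3]
          have h4 : μ (FreeGroup.of s) = MulOpposite.op (σ s) := FreeGroup.lift_apply_of
          rw [h4]
          rfl
      rw [h2]
      exact ih (next v (cond x.2 (↑x.1 : Γ) (↑x.1 : Γ)⁻¹))
  -- relators act trivially
  have hμT : ∀ t ∈ T, μ t = 1 := by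
    intro t ht
    obtain ⟨L, hL, hLlen⟩ := hTlen t ht
    have hker : piS S t = 1 := by
      have : t ∈ (piS S).ker := by
        rw [← hTker]
        exact Subgroup.subset_normalClosure ht
      exact MonoidHom.mem_ker.mp this
    set l : List Γ := L.map (fun x => cond x.2 (↑x.1 : Γ) (↑x.1 : Γ)⁻¹) with hl
    have hlS : ∀ s ∈ l, s ∈ S := by
      intro s hsl
      rw [hl] at hsl
      simp only [List.mem_map] at hsl
      obtain ⟨⟨a, b⟩, _, rfl⟩ := hsl
      cases b
      · exact (mem_S_inv hsymm).mpr a.2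
      · exact a.2
    have hlen : l.length ≤ K := by
      rw [hl, List.length_map]
      exact hLlen
    have hprod : l.prod = 1 := by
      have h5 : piS S (FreeGroup.mk L) = l.prod := by
        rw [piS, FreeGroup.lift_mk]
      rw [← h5, hL, hker]
    have h6 : ∀ v : V, (μ t).unop v = v := by
      intro v
      conv_lhs => rw [← hL]
      rw [hcompute]
      exact hN4 v l hlS hlen hprod
    have : (μ t).unop = 1 := Equiv.ext h6
    calc μ t = MulOpposite.op ((μ t).unop) := rfl
    _ = MulOpposite.op 1 := by rw [this]
    _ = 1 := rfl
  have hkerle : (piS S).ker ≤ μ.ker := by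
    rw [← hTker]
    apply Subgroup.normalClosure_le_normal
    intro t ht
    rw [SetLike.mem_coe, MonoidHom.mem_ker]
    exact hμT t ht
  -- descend to an action of Γ
  have hπsurj : Function.Surjective (piS S) := piS_surjective hgen
  set a : Γ →* (Equiv.Perm V)ᵐᵒᵖ :=
    (piS S).liftOfRightInverse (Function.surjInv hπsurj)
      (Function.rightInverse_surjInv hπsurj) ⟨μ, hkerle⟩ with ha
  have haπ : ∀ x : FreeGroup S, a (piS S x) = μ x := fun x =>
    (piS S).liftOfRightInverse_comp_apply _ _ ⟨μ, hkerle⟩ x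
  set act : Γ → V → V := fun g v => ((a g).unop) v with hact
  have act_mul : ∀ (g h : Γ) (v : V), act (g * h) v = act h (act g v) := by
    intro g h v
    rw [hact]
    simp only [map_mul, MulOpposite.unop_mul, Equiv.Perm.mul_apply]
  have act_one : ∀ v : V, act 1 v = v := by
    intro v
    rw [hact]
    simp only [map_one, MulOpposite.unop_one, Equiv.Perm.coe_one, id_eq]
  have act_s : ∀ (s : Γ) (hs : s ∈ S) (v : V), act s v = next v s := by
    intro s hs v
    have h2 : a s = μ (FreeGroup.of ⟨s, hs⟩) := by
      rw [← haπ]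
      congr 1
      exact (piS_of (S := S) ⟨s, hs⟩).symm
    have h4 : μ (FreeGroup.of ⟨s, hs⟩) = MulOpposite.op (σ ⟨s, hs⟩) := FreeGroup.lift_apply_of
    rw [hact]
    simp only
    rw [h2, h4]
    rfl
  obtain ⟨v₀⟩ := hconn.nonempty
  set Λ : Subgroup Γ :=
    { carrier := {g | act g v₀ = v₀}
      one_mem' := act_one v₀
      mul_mem' := by
        intro g h hg hh
        simp only [Set.mem_setOf_eq] at *
        rw [act_mul, hg, hh]
      inv_mem' := by
        intro g hg
        simp only [Set.mem_setOf_eq] at *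
        have := act_mul g g⁻¹ v₀
        rw [mul_inv_cancel, act_one, hg] at this
        exact this.symm } with hΛ
  have hΛmem : ∀ g : Γ, g ∈ Λ ↔ act g v₀ = v₀ := fun g => Iff.rfl
  -- the bijection
  set θ : Quotient (rightCosetSetoid Λ) → V :=
    Quotient.lift (fun g => act g v₀) (by
      intro g h hgh
      have hk : g * h⁻¹ ∈ Λ := hgh
      have : act ((g * h⁻¹) * h) v₀ = act h (act (g * h⁻¹) v₀) := act_mul _ _ _
      rw [(hΛmem _).mp hk] at this
      simpa using this) with hθ
  have hθmk : ∀ g : Γ, θ (Quotient.mk (rightCosetSetoid Λ) g) = act g v₀ := fun g => rfl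
  have hθinj : Function.Injective θ := by
    intro x y
    induction x using Quotient.ind with
    | _ g =>
    induction y using Quotient.ind with
    | _ h =>
    intro hxy
    rw [hθmk, hθmk] at hxy
    apply Quotient.sound
    show g * h⁻¹ ∈ Λ
    rw [hΛmem]
    have h1 : act (g * h⁻¹) v₀ = act h⁻¹ (act g v₀) := act_mul _ _ _
    rw [hxy] at h1
    rw [h1, ← act_mul, mul_inv_cancel, act_one]
  have hθsurj : Function.Surjective θ := by
    intro v
    have hwalk : ∀ {u v : V} (_ : G₀.Walk u v) (g : Γ), act g v₀ = u → ∃ h : Γ, act h v₀ = v := by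
      intro u v p
      induction p with
      | nil => exact fun g hg => ⟨g, hg⟩
      | @cons A B C hadj p ih =>
        intro g hg
        obtain ⟨s, hs, hB⟩ := hN3 A B hadj
        refine ih (g * s) ?_
        rw [act_mul, hg, act_s s hs, ← hB]
    obtain ⟨p⟩ := hconn.preconnected v₀ v
    obtain ⟨h, hh⟩ := hwalk p 1 (act_one v₀)
    exact ⟨Quotient.mk _ h, hh⟩
  set θe : Quotient (rightCosetSetoid Λ) ≃ V := Equiv.ofBijective θ ⟨hθinj, hθsurj⟩ with hθe
  -- adjacency correspondence
  have hadj : ∀ x y : Quotient (rightCosetSetoid Λ),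
      G₀.Adj (θ x) (θ y) ↔ (schreier Λ S).Adj x y := by
    intro x y
    induction x using Quotient.ind with
    | _ g =>
    induction y using Quotient.ind with
    | _ h =>
    constructor
    · intro hGadj
      obtain ⟨s, hs, hnext⟩ := hN3 _ _ hGadj
      have hy : θ (Quotient.mk (rightCosetSetoid Λ) (g * s)) = θ (Quotient.mk _ h) := by
        rw [hθmk, hθmk, act_mul, act_s s hs]
        rw [hθmk, hθmk] at hnext
        exact hnext.symm
      have hco : Quotient.mk (rightCosetSetoid Λ) (g * s) = Quotient.mk _ h := hθinj hy
      refine ⟨?_, g, s, hs, Or.inl ⟨rfl, hco.symm⟩⟩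
      intro heq
      rw [heq] at hGadj
      exact G₀.loopless.irrefl _ hGadj
    · rintro ⟨hne, g', s, hs, hcase⟩
      have hkey : ∀ (p q : Quotient (rightCosetSetoid Λ)), p ≠ q →
          p = Quotient.mk _ g' → q = Quotient.mk _ (g' * s) → G₀.Adj (θ p) (θ q) := by
        intro p q hpq hp hq
        rw [hp, hq, hθmk, hθmk, act_mul, act_s s hs]
        exact hN1 (act g' v₀) s hs
      rcases hcase with ⟨h1, h2⟩ | ⟨h1, h2⟩
      · exact hkey _ _ hne h1 h2
      · exact (hkey _ _ (Ne.symm hne) h1 h2).symm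
  -- finite index
  have hι : Function.Injective (fun q : Γ ⧸ Λ =>
      Quotient.liftOn' q (fun g => act g⁻¹ v₀) (by
        intro g h hgh
        have hk : g⁻¹ * h ∈ Λ := QuotientGroup.leftRel_apply.mp hgh
        have h1 : h⁻¹ = (g⁻¹ * h)⁻¹ * g⁻¹ := by group
        rw [h1, act_mul, (hΛmem _).mp (Λ.inv_mem hk)])) := by
    intro x y
    refine Quotient.inductionOn₂' x y ?_
    intro g h hxy
    simp only [Quotient.liftOn'_mk''] at hxy
    have h1 : act (g⁻¹ * h) v₀ = act h (act g⁻¹ v₀) := act_mul _ _ _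
    rw [hxy, ← act_mul, inv_mul_cancel, act_one] at h1
    have h2 : g⁻¹ * h ∈ Λ := (hΛmem _).mpr h1
    exact Quotient.sound' (QuotientGroup.leftRel_apply.mpr h2)
  have hfinQ : Finite (Γ ⧸ Λ) := Finite.of_injective _ hι
  refine ⟨Λ, ?_, ?_⟩
  · exact @Subgroup.finiteIndex_of_finite_quotient _ _ Λ hfinQ
  · set iso : schreier Λ S ≃g G₀ := ⟨θe, by intro p q; exact hadj p q⟩ with hiso
    exact ⟨iso.symm⟩

end Schreier


section BuildNext

variable {Γ : Type*} [Group Γ] {S : Set Γ}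

lemma build_next (hsymm : S⁻¹ = S) (hone : (1 : Γ) ∉ S)
    {V : Type} [Fintype V] {G₀ : SimpleGraph V}
    {r r₁ K : ℕ} (hr : r = r₁ + K + 1) (hK : 1 ≤ K) (hr₁ : 1 ≤ r₁)
    (hrig : ∀ f : Γ → Γ, IsPartialIso S r₁ f →
      ∀ x : Γ, (cayley Γ S).edist 1 x ≤ (1 : ℕ∞) → f x = x)
    (gv : V → Γ) (fv : ∀ v : V, ballGraph G₀ v r ≃g ballGraph (cayley Γ S) (gv v) r)
    (hfv : ∀ v : V, fv v (ballRoot G₀ v r) = ballRoot (cayley Γ S) (gv v) r) :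
    ∃ next : V → Γ → V,
      (∀ (v : V) (s : Γ), s ∈ S → G₀.Adj v (next v s)) ∧
      (∀ (v : V) (s : Γ), s ∈ S → next (next v s) s⁻¹ = v) ∧
      (∀ (v y : V), G₀.Adj v y → ∃ s ∈ S, y = next v s) ∧
      (∀ (v : V) (l : List Γ), (∀ s ∈ l, s ∈ S) → l.length ≤ K → l.prod = 1 →
        l.foldl next v = v) := by
  classical
  -- numeric facts
  have hcKr : (K : ℕ∞) + (r₁ : ℕ∞) ≤ (r : ℕ∞) := by
    rw [hr]; exact_mod_cast Nat.le_of_lt_succ (by omega)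
  have hr₁r : (r₁ : ℕ∞) ≤ (r : ℕ∞) := by rw [hr]; exact_mod_cast by omega
  have hKr : (K : ℕ∞) ≤ (r : ℕ∞) := by rw [hr]; exact_mod_cast by omega
  have h1r : (1 : ℕ∞) ≤ (r : ℕ∞) := by rw [hr]; exact_mod_cast by omega
  have h1K : (1 : ℕ∞) ≤ (K : ℕ∞) := by exact_mod_cast hK
  have h1r₁ : (1 : ℕ∞) ≤ (r₁ : ℕ∞) := by exact_mod_cast hr₁
  -- translation invariance helpers
  have htr1 : ∀ γ x : Γ, (cayley Γ S).edist γ (γ * x) = (cayley Γ S).edist 1 x := by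
    intro γ x
    have := cayley_edist_mul (S := S) γ 1 x
    rwa [mul_one] at this
  have htr2 : ∀ γ z : Γ, (cayley Γ S).edist 1 (γ⁻¹ * z) = (cayley Γ S).edist γ z := by
    intro γ z
    have := cayley_edist_mul (S := S) γ 1 (γ⁻¹ * z)
    rw [mul_one, mul_inv_cancel_left] at this
    exact this.symm
  have hedist1 : ∀ s : Γ, s ∈ S → (cayley Γ S).edist 1 s = 1 := by
    intro s hs
    apply SimpleGraph.edist_eq_one_iff_adj.mpr
    rw [cayley_adj hsymm]
    constructor
    · intro h; exact hone (h ▸ hs)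
    · simpa using hs
  -- roots of the inverse isos
  have hsr : ∀ v : V, (fv v).symm (ballRoot (cayley Γ S) (gv v) r) = ballRoot G₀ v r := by
    intro v
    rw [← hfv v]
    exact (fv v).symm_apply_apply _
  -- root distance formulas
  have hFdist : ∀ (v : V) (x : ballSet (cayley Γ S) (gv v) r),
      G₀.edist v ↑((fv v).symm x) = (cayley Γ S).edist (gv v) ↑x := fun v x =>
    rooted_iso_edist_root (fv v).symm (hsr v) x
  have hGdist : ∀ (v : V) (z : ballSet G₀ v r),
      (cayley Γ S).edist (gv v) ↑(fv v z) = G₀.edist v ↑z := fun v z =>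
    rooted_iso_edist_root (fv v) (hfv v) z
  -- the step function
  set next : V → Γ → V := fun v γ =>
    if h : (cayley Γ S).edist (gv v) (gv v * γ) ≤ (r : ℕ∞) then
      ↑((fv v).symm ⟨gv v * γ, h⟩) else v with hnextdef
  have hnext_eq : ∀ (v : V) (γ : Γ) (h : (cayley Γ S).edist (gv v) (gv v * γ) ≤ (r : ℕ∞)),
      next v γ = ↑((fv v).symm ⟨gv v * γ, h⟩) := by
    intro v γ h
    rw [hnextdef]
    simp only [dif_pos h]
  -- THE KEY LEMMA
  have key : ∀ (v : V) (u : Γ), (cayley Γ S).edist 1 u ≤ (K : ℕ∞) → ∀ (s : Γ), s ∈ S →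
      ∀ (h1 : gv v * u ∈ ballSet (cayley Γ S) (gv v) r)
        (h2 : gv v * u * s ∈ ballSet (cayley Γ S) (gv v) r),
      next (↑((fv v).symm ⟨gv v * u, h1⟩)) s = ↑((fv v).symm ⟨gv v * u * s, h2⟩) := by
    intro v u hu s hs h1 h2
    set w : V := ↑((fv v).symm ⟨gv v * u, h1⟩) with hw
    have hwdist : G₀.edist v w = (cayley Γ S).edist 1 u := by
      rw [hw, hFdist v ⟨gv v * u, h1⟩]
      exact htr1 _ _
    have hwmem : w ∈ ballSet G₀ v r := by
      show G₀.edist v w ≤ (r : ℕ∞)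
      rw [hwdist]
      exact le_trans hu hKr
    -- membership of translated points
    have hm1 : ∀ x : Γ, (cayley Γ S).edist 1 x ≤ (r₁ : ℕ∞) →
        gv v * u * x ∈ ballSet (cayley Γ S) (gv v) r := by
      intro x hx
      show (cayley Γ S).edist (gv v) (gv v * u * x) ≤ (r : ℕ∞)
      calc (cayley Γ S).edist (gv v) (gv v * u * x)
          ≤ (cayley Γ S).edist (gv v) (gv v * u) + (cayley Γ S).edist (gv v * u) (gv v * u * x) :=
            SimpleGraph.edist_triangle
      _ = (cayley Γ S).edist 1 u + (cayley Γ S).edist 1 x := by rw [htr1, htr1]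
      _ ≤ (K : ℕ∞) + (r₁ : ℕ∞) := add_le_add hu hx
      _ ≤ (r : ℕ∞) := hcKr
    set Y : Γ → V := fun x =>
      if h : gv v * u * x ∈ ballSet (cayley Γ S) (gv v) r then
        ↑((fv v).symm ⟨gv v * u * x, h⟩) else v with hYdef
    have hYeq : ∀ (x : Γ) (h : gv v * u * x ∈ ballSet (cayley Γ S) (gv v) r),
        Y x = ↑((fv v).symm ⟨gv v * u * x, h⟩) := by
      intro x h
      rw [hYdef]
      simp only [dif_pos h]
    have hYdist : ∀ x : Γ, (cayley Γ S).edist 1 x ≤ (r₁ : ℕ∞) →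
        G₀.edist w (Y x) = (cayley Γ S).edist 1 x := by
      intro x hx
      rw [hYeq x (hm1 x hx), hw]
      have hfit : (cayley Γ S).edist (gv v) (gv v * u)
          + (cayley Γ S).edist (gv v * u) (gv v * u * x) ≤ (r : ℕ∞) := by
        rw [htr1, htr1]
        exact le_trans (add_le_add hu hx) hcKr
      have := rooted_iso_edist (fv v).symm (hsr v) ⟨gv v * u, h1⟩ ⟨gv v * u * x, hm1 x hx⟩ hfit
      rw [this]
      exact htr1 _ _
    have hYmem : ∀ x : Γ, (cayley Γ S).edist 1 x ≤ (r₁ : ℕ∞) → Y x ∈ ballSet G₀ w r := by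
      intro x hx
      show G₀.edist w (Y x) ≤ (r : ℕ∞)
      rw [hYdist x hx]
      exact le_trans hx hr₁r
    set χ : Γ → Γ := fun x =>
      if h : Y x ∈ ballSet G₀ w r then (gv w)⁻¹ * ↑(fv w ⟨Y x, h⟩) else x with hχdef
    have hχeq : ∀ (x : Γ) (h : Y x ∈ ballSet G₀ w r),
        χ x = (gv w)⁻¹ * ↑(fv w ⟨Y x, h⟩) := by
      intro x h
      rw [hχdef]
      simp only [dif_pos h]
    -- distance preservation for χ
    have hχdist : ∀ x : Γ, (cayley Γ S).edist 1 x ≤ (r₁ : ℕ∞) →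
        (cayley Γ S).edist 1 (χ x) = (cayley Γ S).edist 1 x := by
      intro x hx
      rw [hχeq x (hYmem x hx), htr2, hGdist w ⟨Y x, hYmem x hx⟩]
      exact hYdist x hx
    -- adjacency preservation for χ
    have hχadj : ∀ x y : Γ, (cayley Γ S).edist 1 x ≤ (r₁ : ℕ∞) →
        (cayley Γ S).edist 1 y ≤ (r₁ : ℕ∞) →
        ((cayley Γ S).Adj x y ↔ (cayley Γ S).Adj (χ x) (χ y)) := by
      intro x y hx hy
      have e1 : (cayley Γ S).Adj x y ↔ (cayley Γ S).Adj (gv v * u * x) (gv v * u * y) := by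
        constructor
        · intro h
          have := (leftMul (S := S) (gv v * u)).map_rel_iff.mpr h
          simpa [leftMul, mul_assoc] using this
        · intro h
          have : (cayley Γ S).Adj (leftMul (S := S) (gv v * u) x) (leftMul (S := S) (gv v * u) y) := by
            simpa [leftMul, mul_assoc] using h
          exact (leftMul (S := S) (gv v * u)).map_rel_iff.mp this
      have e2 : (cayley Γ S).Adj (gv v * u * x) (gv v * u * y) ↔ G₀.Adj (Y x) (Y y) := by
        rw [hYeq x (hm1 x hx), hYeq y (hm1 y hy)]
        constructor
        · intro h
          exact ((fv v).symm.map_rel_iff (a := ⟨gv v * u * x, hm1 x hx⟩)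
            (b := ⟨gv v * u * y, hm1 y hy⟩)).mpr h
        · intro h
          exact ((fv v).symm.map_rel_iff (a := ⟨gv v * u * x, hm1 x hx⟩)
            (b := ⟨gv v * u * y, hm1 y hy⟩)).mp h
      have e3 : G₀.Adj (Y x) (Y y) ↔ (cayley Γ S).Adj (χ x) (χ y) := by
        rw [hχeq x (hYmem x hx), hχeq y (hYmem y hy)]
        constructor
        · intro h
          have h2 : (cayley Γ S).Adj ↑(fv w ⟨Y x, hYmem x hx⟩) ↑(fv w ⟨Y y, hYmem y hy⟩) :=
            ((fv w).map_rel_iff (a := ⟨Y x, hYmem x hx⟩) (b := ⟨Y y, hYmem y hy⟩)).mpr h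
          have := (leftMul (S := S) (gv w)⁻¹).map_rel_iff.mpr h2
          simpa [leftMul] using this
        · intro h
          have h2 : (cayley Γ S).Adj
              ((leftMul (S := S) (gv w)⁻¹) ↑(fv w ⟨Y x, hYmem x hx⟩))
              ((leftMul (S := S) (gv w)⁻¹) ↑(fv w ⟨Y y, hYmem y hy⟩)) := by
            simpa [leftMul] using h
          have h3 := (leftMul (S := S) (gv w)⁻¹).map_rel_iff.mp h2
          exact ((fv w).map_rel_iff (a := ⟨Y x, hYmem x hx⟩) (b := ⟨Y y, hYmem y hy⟩)).mp h3
      rw [e1, e2, e3]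
    -- injectivity
    have hχinj : ∀ x y : Γ, (cayley Γ S).edist 1 x ≤ (r₁ : ℕ∞) →
        (cayley Γ S).edist 1 y ≤ (r₁ : ℕ∞) → χ x = χ y → x = y := by
      intro x y hx hy hxy
      rw [hχeq x (hYmem x hx), hχeq y (hYmem y hy)] at hxy
      have h3 : (↑(fv w ⟨Y x, hYmem x hx⟩) : Γ) = ↑(fv w ⟨Y y, hYmem y hy⟩) :=
        mul_left_cancel hxy
      have h4 : Y x = Y y := by
        have := (fv w).injective (Subtype.ext h3)
        exact congrArg Subtype.val this
      rw [hYeq x (hm1 x hx), hYeq y (hm1 y hy)] at h4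
      have h5 := (fv v).symm.injective (Subtype.ext h4)
      have h6 : gv v * u * x = gv v * u * y := congrArg Subtype.val h5
      exact mul_left_cancel h6
    -- surjectivity
    have hχsurj : ∀ y : Γ, (cayley Γ S).edist 1 y ≤ (r₁ : ℕ∞) →
        ∃ x, (cayley Γ S).edist 1 x ≤ (r₁ : ℕ∞) ∧ χ x = y := by
      intro y hy
      have hymem : gv w * y ∈ ballSet (cayley Γ S) (gv w) r := by
        show (cayley Γ S).edist (gv w) (gv w * y) ≤ (r : ℕ∞)
        rw [htr1]
        exact le_trans hy hr₁r
      set z : V := ↑((fv w).symm ⟨gv w * y, hymem⟩) with hz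
      have hzdist : G₀.edist w z = (cayley Γ S).edist 1 y := by
        rw [hz, hFdist w ⟨gv w * y, hymem⟩]
        exact htr1 _ _
      have hzmem : z ∈ ballSet G₀ v r := by
        show G₀.edist v z ≤ (r : ℕ∞)
        calc G₀.edist v z ≤ G₀.edist v w + G₀.edist w z := SimpleGraph.edist_triangle
        _ = (cayley Γ S).edist 1 u + (cayley Γ S).edist 1 y := by rw [hwdist, hzdist]
        _ ≤ (K : ℕ∞) + (r₁ : ℕ∞) := add_le_add hu hy
        _ ≤ (r : ℕ∞) := hcKr
      set p : Γ := ↑(fv v ⟨z, hzmem⟩) with hp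
      set x : Γ := (gv v * u)⁻¹ * p with hx
      have hfvw : (↑(fv v ⟨w, hwmem⟩) : Γ) = gv v * u := by
        have h7 : (⟨w, hwmem⟩ : ballSet G₀ v r) = (fv v).symm ⟨gv v * u, h1⟩ := Subtype.ext rfl
        rw [h7, (fv v).apply_symm_apply]
      have hxdist : (cayley Γ S).edist 1 x = (cayley Γ S).edist 1 y := by
        rw [hx, htr2, hp]
        have hfit : G₀.edist v ↑(⟨w, hwmem⟩ : ballSet G₀ v r)
            + G₀.edist ↑(⟨w, hwmem⟩ : ballSet G₀ v r) ↑(⟨z, hzmem⟩ : ballSet G₀ v r)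
            ≤ (r : ℕ∞) := by
          rw [show (↑(⟨w, hwmem⟩ : ballSet G₀ v r) : V) = w from rfl,
            show (↑(⟨z, hzmem⟩ : ballSet G₀ v r) : V) = z from rfl, hwdist, hzdist]
          exact le_trans (add_le_add hu hy) hcKr
        have h8 := rooted_iso_edist (fv v) (hfv v) ⟨w, hwmem⟩ ⟨z, hzmem⟩ hfit
        rw [show (↑(⟨w, hwmem⟩ : ballSet G₀ v r) : V) = w from rfl,
          show (↑(⟨z, hzmem⟩ : ballSet G₀ v r) : V) = z from rfl] at h8
        rw [← hfvw]
        rw [h8, hzdist]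
      have hxle : (cayley Γ S).edist 1 x ≤ (r₁ : ℕ∞) := by rw [hxdist]; exact hy
      refine ⟨x, hxle, ?_⟩
      have hpx : gv v * u * x = p := by rw [hx]; group
      have hYx : Y x = z := by
        have hmem' : gv v * u * x ∈ ballSet (cayley Γ S) (gv v) r := by
          rw [hpx, hp]
          exact (fv v ⟨z, hzmem⟩).2
        rw [hYeq x hmem']
        have h9 : (⟨gv v * u * x, hmem'⟩ : ballSet (cayley Γ S) (gv v) r) = fv v ⟨z, hzmem⟩ := by
          apply Subtype.ext
          show gv v * u * x = ↑(fv v ⟨z, hzmem⟩)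
          rw [hpx, hp]
        rw [h9, (fv v).symm_apply_apply]
      have hYxmem : Y x ∈ ballSet G₀ w r := by
        rw [hYx]
        show G₀.edist w z ≤ (r : ℕ∞)
        rw [hzdist]
        exact le_trans hy hr₁r
      rw [hχeq x hYxmem]
      have h10 : (⟨Y x, hYxmem⟩ : ballSet G₀ w r) = (fv w).symm ⟨gv w * y, hymem⟩ :=
        Subtype.ext hYx
      rw [h10, (fv w).apply_symm_apply]
      exact inv_mul_cancel_left _ _
    -- apply rigidity
    have hpiso : IsPartialIso S r₁ χ := ⟨hχdist, hχadj, hχinj, hχsurj⟩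
    have hs1 : (cayley Γ S).edist 1 s ≤ (1 : ℕ∞) := le_of_eq (hedist1 s hs)
    have hχs : χ s = s := hrig χ hpiso s hs1
    have hsr₁ : (cayley Γ S).edist 1 s ≤ (r₁ : ℕ∞) := le_trans hs1 h1r₁
    rw [hχeq s (hYmem s hsr₁)] at hχs
    have h11 : (↑(fv w ⟨Y s, hYmem s hsr₁⟩) : Γ) = gv w * s := by
      have h11' := congrArg (fun t => gv w * t) hχs
      simpa using h11'
    -- now compute next w s
    have hcond : (cayley Γ S).edist (gv w) (gv w * s) ≤ (r : ℕ∞) := by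
      rw [htr1]
      exact le_trans hs1 h1r
    have h12 : (⟨gv w * s, hcond⟩ : ballSet (cayley Γ S) (gv w) r)
        = fv w ⟨Y s, hYmem s hsr₁⟩ := Subtype.ext h11.symm
    have h12' : ((fv w).symm ⟨gv w * s, hcond⟩ : ballSet G₀ w r) = ⟨Y s, hYmem s hsr₁⟩ := by
      rw [h12, (fv w).symm_apply_apply]
    rw [hnext_eq w s hcond, h12']
    show Y s = ↑((fv v).symm ⟨gv v * u * s, h2⟩)
    rw [hYeq s (hm1 s hsr₁)]
  -- ======== derive the four properties ========
  have hscond : ∀ (v : V) (s : Γ), s ∈ S →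
      (cayley Γ S).edist (gv v) (gv v * s) ≤ (r : ℕ∞) := by
    intro v s hs
    rw [htr1]
    exact le_trans (le_of_eq (hedist1 s hs)) h1r
  -- N1 : adjacency
  have hN1 : ∀ (v : V) (s : Γ), s ∈ S → G₀.Adj v (next v s) := by
    intro v s hs
    rw [hnext_eq v s (hscond v s hs)]
    have hadj : (ballGraph (cayley Γ S) (gv v) r).Adj (ballRoot (cayley Γ S) (gv v) r)
        ⟨gv v * s, hscond v s hs⟩ := cayley_adj_mul hsymm hone hs
    have := ((fv v).symm.map_rel_iff
      (a := ballRoot (cayley Γ S) (gv v) r) (b := ⟨gv v * s, hscond v s hs⟩)).mpr hadj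
    rw [hsr v] at this
    exact this
  -- N2 : inverse steps
  have hN2 : ∀ (v : V) (s : Γ), s ∈ S → next (next v s) s⁻¹ = v := by
    intro v s hs
    have hsK : (cayley Γ S).edist 1 s ≤ (K : ℕ∞) := le_trans (le_of_eq (hedist1 s hs)) h1K
    have h2' : gv v * s * s⁻¹ ∈ ballSet (cayley Γ S) (gv v) r := by
      rw [mul_inv_cancel_right]
      exact root_mem_ballSet _ _ _
    rw [hnext_eq v s (hscond v s hs)]
    rw [key v s hsK s⁻¹ ((mem_S_inv hsymm).mpr hs) (hscond v s hs) h2']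
    have h13 : (⟨gv v * s * s⁻¹, h2'⟩ : ballSet (cayley Γ S) (gv v) r)
        = ballRoot (cayley Γ S) (gv v) r := Subtype.ext (mul_inv_cancel_right _ _)
    rw [h13, hsr v]
  -- N3 : all neighbours arise
  have hN3 : ∀ (v y : V), G₀.Adj v y → ∃ s ∈ S, y = next v s := by
    intro v y hadj
    have hymem : y ∈ ballSet G₀ v r := by
      show G₀.edist v y ≤ (r : ℕ∞)
      rw [SimpleGraph.edist_eq_one_iff_adj.mpr hadj]
      exact h1r
    have hcadj : (cayley Γ S).Adj (gv v) ↑(fv v ⟨y, hymem⟩) := by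
      have hball : (ballGraph G₀ v r).Adj (ballRoot G₀ v r) ⟨y, hymem⟩ := hadj
      have := ((fv v).map_rel_iff (a := ballRoot G₀ v r) (b := ⟨y, hymem⟩)).mpr hball
      rw [hfv v] at this
      exact this
    obtain ⟨hne, hsmem⟩ := (cayley_adj hsymm).mp hcadj
    refine ⟨(gv v)⁻¹ * ↑(fv v ⟨y, hymem⟩), hsmem, ?_⟩
    have hcond : (cayley Γ S).edist (gv v) (gv v * ((gv v)⁻¹ * ↑(fv v ⟨y, hymem⟩))) ≤ (r : ℕ∞) := by
      rw [mul_inv_cancel_left]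
      exact (fv v ⟨y, hymem⟩).2
    rw [hnext_eq v _ hcond]
    have h14 : (⟨gv v * ((gv v)⁻¹ * ↑(fv v ⟨y, hymem⟩)), hcond⟩ : ballSet (cayley Γ S) (gv v) r)
        = fv v ⟨y, hymem⟩ := Subtype.ext (mul_inv_cancel_left _ _)
    rw [h14, (fv v).symm_apply_apply]
  -- N4 : short relations close up
  have hword : ∀ (l : List Γ), (∀ s ∈ l, s ∈ S) → l.length ≤ K →
      ∀ (v : V) (h : gv v * l.prod ∈ ballSet (cayley Γ S) (gv v) r),
      l.foldl next v = ↑((fv v).symm ⟨gv v * l.prod, h⟩) := by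
    intro l
    induction l using List.reverseRecOn with
    | nil =>
      intro _ _ v h
      have h15 : (⟨gv v * List.prod [], h⟩ : ballSet (cayley Γ S) (gv v) r)
          = ballRoot (cayley Γ S) (gv v) r :=
        Subtype.ext (by show gv v * List.prod [] = gv v; simp)
      rw [h15, hsr v]
      rfl
    | append_singleton l s ih =>
      intro hlS hlen v h
      have hsS : s ∈ S := hlS s (by simp)
      have hlS' : ∀ t ∈ l, t ∈ S := fun t ht => hlS t (by simp [ht])
      have hlen' : l.length ≤ K := by
        simp only [List.length_append, List.length_singleton] at hlen
        omega
      have hprodK : (cayley Γ S).edist 1 l.prod ≤ (K : ℕ∞) :=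
        le_trans (edist_prod_le_length hsymm hone hlS') (by exact_mod_cast hlen')
      have hpre : gv v * l.prod ∈ ballSet (cayley Γ S) (gv v) r := by
        show (cayley Γ S).edist (gv v) (gv v * l.prod) ≤ (r : ℕ∞)
        rw [htr1]
        exact le_trans hprodK hKr
      have h2' : gv v * l.prod * s ∈ ballSet (cayley Γ S) (gv v) r := by
        have : gv v * l.prod * s = gv v * (l ++ [s]).prod := by
          rw [List.prod_append, List.prod_singleton, mul_assoc]
        rw [this]
        exact h
      rw [List.foldl_append]
      rw [ih hlS' hlen' v hpre]
      rw [show List.foldl next (↑((fv v).symm ⟨gv v * l.prod, hpre⟩)) [s]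
        = next (↑((fv v).symm ⟨gv v * l.prod, hpre⟩)) s from rfl]
      rw [key v l.prod hprodK s hsS hpre h2']
      congr 1
      apply congrArg
      apply Subtype.ext
      show gv v * l.prod * s = gv v * (l ++ [s]).prod
      rw [List.prod_append, List.prod_singleton, mul_assoc]
  have hN4 : ∀ (v : V) (l : List Γ), (∀ s ∈ l, s ∈ S) → l.length ≤ K → l.prod = 1 →
      l.foldl next v = v := by
    intro v l hlS hlen hprod
    have h : gv v * l.prod ∈ ballSet (cayley Γ S) (gv v) r := by
      rw [hprod, mul_one]
      exact root_mem_ballSet _ _ _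
    rw [hword l hlS hlen v h]
    have h16 : (⟨gv v * l.prod, h⟩ : ballSet (cayley Γ S) (gv v) r)
        = ballRoot (cayley Γ S) (gv v) r :=
      Subtype.ext (by show gv v * l.prod = gv v; rw [hprod, mul_one])
    rw [h16, hsr v]
  exact ⟨next, hN1, hN2, hN3, hN4⟩

end BuildNext

end LGR

/-- Main theorem: if `Γ` is finitely presented and `Cay(Γ,S)` is automorphism-regular,
then there is `r` such that every connected perfect finite `r`-local model of `Cay(Γ,S)`
is isomorphic to the Schreier graph of a finite-index subgroup of `Γ`. -/
theorem connected_local_model_is_schreier (Γ : Type*) [Group Γ] (S : Set Γ)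
    (hfp : IsFinitelyPresented Γ)
    (hfin : S.Finite) (hgen : Subgroup.closure S = ⊤) (hsymm : S⁻¹ = S) (hone : (1 : Γ) ∉ S)
    (hreg : ∀ φ : cayley Γ S ≃g cayley Γ S, ∀ v : Γ, φ v = v → ∀ w : Γ, φ w = w) :
    ∃ r : ℕ, ∀ (V : Type) [Fintype V] (G₀ : SimpleGraph V), G₀.Connected →
      (∀ v : V, ∃ g : Γ, BallRootedIso G₀ v (cayley Γ S) g r) →
      ∃ Λ : Subgroup Γ, Λ.FiniteIndex ∧ Nonempty (G₀ ≃g schreier Λ S) := by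
  classical
  obtain ⟨T, hTfin, hTker⟩ := LGR.presentation_transport hfp hfin hgen
  set K : ℕ := max (hTfin.toFinset.sup fun t => t.toWord.length) 1 with hKdef
  have hK : 1 ≤ K := le_max_right _ _
  obtain ⟨r₁0, hrig0⟩ := LGR.rigidity hfin hgen hsymm hone hreg
  set r₁ : ℕ := max r₁0 1 with hr₁def
  have hr₁ : 1 ≤ r₁ := le_max_right _ _
  have hrig : ∀ f : Γ → Γ, LGR.IsPartialIso S r₁ f →
      ∀ x : Γ, (cayley Γ S).edist 1 x ≤ (1 : ℕ∞) → f x = x := fun f hf =>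
    hrig0 f (LGR.isPartialIso_mono hf (le_max_left _ _))
  have hTlen : ∀ t ∈ T, ∃ L : List (S × Bool), FreeGroup.mk L = t ∧ L.length ≤ K := by
    intro t ht
    refine ⟨t.toWord, FreeGroup.mk_toWord, ?_⟩
    calc t.toWord.length ≤ hTfin.toFinset.sup fun t => t.toWord.length :=
          Finset.le_sup (f := fun t => t.toWord.length) (hTfin.mem_toFinset.mpr ht)
    _ ≤ K := le_max_left _ _
  refine ⟨r₁ + K + 1, ?_⟩
  intro V _ G₀ hconn hloc
  choose gv hBR using hloc
  choose fv hfv using hBR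
  obtain ⟨next, hN1, hN2, hN3, hN4⟩ :=
    LGR.build_next hsymm hone rfl hK hr₁ hrig gv fv hfv
  exact LGR.schreier_model hgen hsymm hconn T hTker K hTlen next hN1 hN2 hN3 hN4
end

section
/- Suppose Γ is a finitely presented group with finite symmetric generating set S, 1 ∉ S, such that Cay(Γ,S) is automorphism-regular, and suppose Γ is not residually finite. Then there exists r ∈ ℕ such that Cay(Γ,S) has no perfect finite r-local model. -/
open SimpleGraph

namespace LM

variable {V : Type*} {V' : Type*} {G : SimpleGraph V} {G' : SimpleGraph V'}

lemma mem_ballSet {v x : V} {r : ℕ} : x ∈ ballSet G v r ↔ G.edist v x ≤ r := Iff.rfl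

/-- lift a walk whose support is inside `s` to the induced graph -/
lemma walk_induce {s : Set V} :
    ∀ {u w : V} (p : G.Walk u w), (∀ y ∈ p.support, y ∈ s) →
      ∀ (hu : u ∈ s) (hw : w ∈ s),
      ∃ q : (G.induce s).Walk ⟨u, hu⟩ ⟨w, hw⟩, q.length = p.length := by
  intro u w p
  induction p with
  | nil => intro _ hu _; exact ⟨.nil, rfl⟩
  | @cons u x w h p ih =>
      intro hs hu hw
      have hx : x ∈ s := hs x (by simp [SimpleGraph.Walk.support_cons])
      obtain ⟨q, hq⟩ := ih (fun y hy => hs y (by simp [SimpleGraph.Walk.support_cons, hy])) hx hw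
      exact ⟨.cons (by exact h : (G.induce s).Adj ⟨u, hu⟩ ⟨x, hx⟩) q, congrArg (· + 1) hq⟩

lemma edist_le_of_mem_support {u w y : V} (p : G.Walk u w) (hy : y ∈ p.support) :
    G.edist u y ≤ p.length := by
  classical
  calc G.edist u y ≤ (p.takeUntil y hy).length := SimpleGraph.edist_le _
  _ ≤ p.length := by exact_mod_cast p.length_takeUntil_le hy

lemma edist_induce_le {v w x : V} {r : ℕ} (hw : w ∈ ballSet G v r) (hx : x ∈ ballSet G v r)
    {a ρ : ℕ} (hvw : G.edist v w ≤ a) (har : a + ρ ≤ r) (hwx : G.edist w x ≤ ρ) :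
    (ballGraph G v r).edist ⟨w, hw⟩ ⟨x, hx⟩ ≤ ρ := by
  have hne : G.edist w x ≠ ⊤ := fun h => by simp [h] at hwx
  obtain ⟨p, hp⟩ := SimpleGraph.exists_walk_of_edist_ne_top hne
  have hplen : (p.length : ℕ∞) ≤ ρ := by rw [hp]; exact hwx
  have hsup : ∀ y ∈ p.support, y ∈ ballSet G v r := by
    intro y hy
    have h1 : G.edist w y ≤ p.length := edist_le_of_mem_support p hy
    have : G.edist v y ≤ G.edist v w + G.edist w y := SimpleGraph.edist_triangle
    refine le_trans this (le_trans (add_le_add hvw (le_trans h1 hplen)) ?_)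
    exact_mod_cast har
  obtain ⟨q, hq⟩ := walk_induce p hsup hw hx
  calc (ballGraph G v r).edist ⟨w, hw⟩ ⟨x, hx⟩ ≤ q.length := SimpleGraph.edist_le _
  _ ≤ ρ := by rw [hq]; exact hplen

lemma edist_le_induce {v : V} {r : ℕ} (w x : ballSet G v r) :
    G.edist ↑w ↑x ≤ (ballGraph G v r).edist w x := by
  by_cases h : (ballGraph G v r).edist w x = ⊤
  · simp [h]
  obtain ⟨q, hq⟩ := SimpleGraph.exists_walk_of_edist_ne_top h
  rw [← hq]
  clear hq h
  induction q with
  | nil => simp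
  | @cons a b c h q ih =>
      have hab : G.Adj ↑a ↑b := h
      calc G.edist ↑a ↑c ≤ G.edist ↑a ↑b + G.edist ↑b ↑c := SimpleGraph.edist_triangle
      _ ≤ 1 + q.length := add_le_add (by simpa using SimpleGraph.edist_le hab.toWalk) ih
      _ = ((q.length + 1 : ℕ) : ℕ∞) := by push_cast; ring
      _ = _ := by simp [SimpleGraph.Walk.length_cons]

lemma edist_induce_eq {v w x : V} {r : ℕ} (hw : w ∈ ballSet G v r) (hx : x ∈ ballSet G v r)
    {a ρ : ℕ} (hvw : G.edist v w ≤ a) (har : a + ρ ≤ r) (hwx : G.edist w x ≤ ρ) :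
    (ballGraph G v r).edist ⟨w, hw⟩ ⟨x, hx⟩ = G.edist w x := by
  refine le_antisymm ?_ (edist_le_induce _ _)
  have hne : G.edist w x ≠ ⊤ := fun h => by simp [h] at hwx
  set d := (G.edist w x).toNat with hd
  have hcoe : (d : ℕ∞) = G.edist w x := ENat.coe_toNat hne
  have hdρ : d ≤ ρ := by exact_mod_cast hcoe ▸ hwx
  have := edist_induce_le hw hx hvw (le_trans (by omega : a + d ≤ a + ρ) har) hcoe.ge
  rw [← hcoe]; exact_mod_cast this

lemma edist_induce_root_eq {v x : V} {r : ℕ} (hx : x ∈ ballSet G v r) :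
    (ballGraph G v r).edist (ballRoot G v r) ⟨x, hx⟩ = G.edist v x :=
  edist_induce_eq _ _ (a := 0) (ρ := r) (by simp) (by simp) hx

lemma iso_edist_le (ψ : G ≃g G') (a b : V) : G'.edist (ψ a) (ψ b) ≤ G.edist a b := by
  by_cases h : G.edist a b = ⊤
  · simp [h]
  obtain ⟨p, hp⟩ := SimpleGraph.exists_walk_of_edist_ne_top h
  calc G'.edist (ψ a) (ψ b) ≤ (p.map ψ.toHom).length := SimpleGraph.edist_le _
  _ = p.length := by rw [SimpleGraph.Walk.length_map]
  _ = _ := hp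

lemma iso_edist (φ : G ≃g G') (u v : V) : G'.edist (φ u) (φ v) = G.edist u v := by
  refine le_antisymm (iso_edist_le φ u v) ?_
  have := iso_edist_le φ.symm (φ u) (φ v)
  simpa using this

lemma rooted_iso_edist {v : V} {v' : V'} {r : ℕ}
    (φ : ballGraph G v r ≃g ballGraph G' v' r)
    (hroot : φ (ballRoot G v r) = ballRoot G' v' r)
    {x : V} (hx : x ∈ ballSet G v r) :
    G'.edist v' ↑(φ ⟨x, hx⟩) = G.edist v x := by
  have h1 : (ballGraph G' v' r).edist (ballRoot G' v' r) (φ ⟨x, hx⟩) = G.edist v x := by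
    rw [← hroot, iso_edist φ (ballRoot G v r) ⟨x, hx⟩, edist_induce_root_eq]
  have h2 : G'.edist v' ↑(φ ⟨x, hx⟩) ≤ (r : ℕ∞) := by
    calc G'.edist v' ↑(φ ⟨x, hx⟩)
        ≤ (ballGraph G' v' r).edist (ballRoot G' v' r) (φ ⟨x, hx⟩) := edist_le_induce _ _
    _ = G.edist v x := h1
    _ ≤ r := hx
  have h3 : (⟨↑(φ ⟨x, hx⟩), h2⟩ : ballSet G' v' r) = φ ⟨x, hx⟩ := Subtype.ext rfl
  rw [← edist_induce_root_eq h2, h3, h1]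

end LM
namespace LM
variable {V : Type*} {V' : Type*} {G : SimpleGraph V} {G' : SimpleGraph V'}

/-- transport a ball iso along an equality of centers -/
def recenter {c c' : V} (h : c = c') (r : ℕ) : ballGraph G c r ≃g ballGraph G c' r := by
  subst h; exact RelIso.refl _

@[simp] lemma recenter_coe {c c' : V} (h : c = c') (r : ℕ) (x : ballSet G c r) :
    ((recenter h r x : ballSet G c' r) : V) = (x : V) := by subst h; rfl

lemma symm_coe {W W' : Type*} {H : SimpleGraph W} {H' : SimpleGraph W'} (ψ : H ≃g H')
    (A : W') (B : W) (h : A = ψ B) : ψ.symm A = B := by rw [h, ψ.symm_apply_apply]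

lemma app_coe {W W' : Type*} {H : SimpleGraph W} {H' : SimpleGraph W'} (ψ : H ≃g H')
    (A : W) (B : W') (h : A = ψ.symm B) : ψ A = B := by rw [h, ψ.apply_symm_apply]

/-- a global iso induces isos of balls -/
def ballIsoOfIso (φ : G ≃g G') {v : V} {v' : V'} (hv : φ v = v') (r : ℕ) :
    ballGraph G v r ≃g ballGraph G' v' r where
  toFun x := ⟨φ ↑x, by
    have := LM.iso_edist φ v ↑x
    simp only [mem_ballSet, hv ▸ this]
    exact x.2⟩
  invFun y := ⟨φ.symm ↑y, by
    have h2 := LM.iso_edist φ.symm v' ↑y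
    rw [show φ.symm v' = v by rw [← hv]; exact φ.symm_apply_apply v] at h2
    simpa only [mem_ballSet, h2] using y.2⟩
  left_inv x := Subtype.ext (φ.symm_apply_apply _)
  right_inv y := Subtype.ext (φ.apply_symm_apply _)
  map_rel_iff' := by
    intro a b
    simp only [Equiv.coe_fn_mk, SimpleGraph.comap_adj, Function.Embedding.coe_subtype]
    exact φ.map_rel_iff

@[simp] lemma ballIsoOfIso_coe (φ : G ≃g G') {v : V} {v' : V'} (hv : φ v = v') (r : ℕ)
    (x : ballSet G v r) : ((ballIsoOfIso φ hv r x : ballSet G' v' r) : V') = φ ↑x := rfl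

lemma ballIsoOfIso_root (φ : G ≃g G') {v : V} {v' : V'} (hv : φ v = v') (r : ℕ) :
    ballIsoOfIso φ hv r (ballRoot G v r) = ballRoot G' v' r := Subtype.ext hv

lemma around_mem_big {v w : V} {a ρ r : ℕ} (har : a + ρ ≤ r) (hw : G.edist v w ≤ a)
    (x : ballSet G w ρ) : (↑x : V) ∈ ballSet G v r :=
  le_trans SimpleGraph.edist_triangle (le_trans (add_le_add hw x.2) (by exact_mod_cast har))

lemma around_mem_target {v : V} {v' : V'} {r : ℕ}
    (φ : ballGraph G v r ≃g ballGraph G' v' r)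
    {a ρ : ℕ} (har : a + ρ ≤ r) {w : V} (hwmem : w ∈ ballSet G v r) (hw : G.edist v w ≤ a)
    (x : ballSet G w ρ) :
    (φ ⟨↑x, around_mem_big har hw x⟩).1 ∈ ballSet G' (φ ⟨w, hwmem⟩).1 ρ := by
  show G'.edist _ _ ≤ _
  calc G'.edist (φ ⟨w, hwmem⟩).1 (φ ⟨↑x, around_mem_big har hw x⟩).1
      ≤ (ballGraph G' v' r).edist (φ ⟨w, hwmem⟩) (φ ⟨↑x, around_mem_big har hw x⟩) :=
        edist_le_induce _ _
  _ = (ballGraph G v r).edist ⟨w, hwmem⟩ ⟨↑x, around_mem_big har hw x⟩ := iso_edist φ _ _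
  _ = G.edist w ↑x := edist_induce_eq _ _ hw har x.2
  _ ≤ ρ := x.2

lemma around_edist_target {v : V} {v' : V'} {r : ℕ}
    (φ : ballGraph G v r ≃g ballGraph G' v' r)
    (hroot : φ (ballRoot G v r) = ballRoot G' v' r)
    {a : ℕ} {w : V} (hwmem : w ∈ ballSet G v r) (hw : G.edist v w ≤ a) :
    G'.edist v' (φ ⟨w, hwmem⟩).1 ≤ a := by
  rw [rooted_iso_edist φ hroot hwmem]; exact hw

lemma around_mem_big' {v : V} {v' : V'} {r : ℕ}
    (φ : ballGraph G v r ≃g ballGraph G' v' r)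
    (hroot : φ (ballRoot G v r) = ballRoot G' v' r)
    {a ρ : ℕ} (har : a + ρ ≤ r) {w : V} (hwmem : w ∈ ballSet G v r) (hw : G.edist v w ≤ a)
    (y : ballSet G' (φ ⟨w, hwmem⟩).1 ρ) : (↑y : V') ∈ ballSet G' v' r :=
  le_trans SimpleGraph.edist_triangle
    (le_trans (add_le_add (around_edist_target φ hroot hwmem hw) y.2) (by exact_mod_cast har))

lemma around_mem_source {v : V} {v' : V'} {r : ℕ}
    (φ : ballGraph G v r ≃g ballGraph G' v' r)
    (hroot : φ (ballRoot G v r) = ballRoot G' v' r)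
    {a ρ : ℕ} (har : a + ρ ≤ r) {w : V} (hwmem : w ∈ ballSet G v r) (hw : G.edist v w ≤ a)
    (y : ballSet G' (φ ⟨w, hwmem⟩).1 ρ) :
    (φ.symm ⟨↑y, around_mem_big' φ hroot har hwmem hw y⟩).1 ∈ ballSet G w ρ := by
  show G.edist w _ ≤ _
  have hww : φ.symm (φ ⟨w, hwmem⟩) = ⟨w, hwmem⟩ := φ.symm_apply_apply _
  calc G.edist w (φ.symm ⟨↑y, around_mem_big' φ hroot har hwmem hw y⟩).1
      = G.edist (φ.symm (φ ⟨w, hwmem⟩)).1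
          (φ.symm ⟨↑y, around_mem_big' φ hroot har hwmem hw y⟩).1 := by rw [hww]
  _ ≤ (ballGraph G v r).edist (φ.symm (φ ⟨w, hwmem⟩))
        (φ.symm ⟨↑y, around_mem_big' φ hroot har hwmem hw y⟩) := by
        rw [hww]; exact edist_le_induce _ _
  _ = (ballGraph G' v' r).edist (φ ⟨w, hwmem⟩) ⟨↑y, around_mem_big' φ hroot har hwmem hw y⟩ :=
        iso_edist φ.symm _ _
  _ = G'.edist (φ ⟨w, hwmem⟩).1 ↑y :=
        edist_induce_eq _ _ (around_edist_target φ hroot hwmem hw) har y.2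
  _ ≤ ρ := y.2

/-- restriction of a rooted ball iso to a smaller ball around an interior point -/
def ballIsoAround {v : V} {v' : V'} {r : ℕ}
    (φ : ballGraph G v r ≃g ballGraph G' v' r)
    (hroot : φ (ballRoot G v r) = ballRoot G' v' r)
    {a ρ : ℕ} (har : a + ρ ≤ r) {w : V} (hwmem : w ∈ ballSet G v r) (hw : G.edist v w ≤ a) :
    ballGraph G w ρ ≃g ballGraph G' (φ ⟨w, hwmem⟩).1 ρ where
  toFun x := ⟨(φ ⟨↑x, around_mem_big har hw x⟩).1, around_mem_target φ har hwmem hw x⟩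
  invFun y := ⟨(φ.symm ⟨↑y, around_mem_big' φ hroot har hwmem hw y⟩).1,
    around_mem_source φ hroot har hwmem hw y⟩
  left_inv x := by
    apply Subtype.ext
    show (φ.symm _).1 = (↑x : V)
    exact congrArg Subtype.val (φ.symm_apply_apply ⟨↑x, around_mem_big har hw x⟩)
  right_inv y := by
    apply Subtype.ext
    show (φ _).1 = (↑y : V')
    exact congrArg Subtype.val (φ.apply_symm_apply ⟨↑y, around_mem_big' φ hroot har hwmem hw y⟩)
  map_rel_iff' := by
    intro x y
    simp only [Equiv.coe_fn_mk, SimpleGraph.comap_adj, Function.Embedding.coe_subtype]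
    exact φ.map_rel_iff

lemma ballIsoAround_coe {v : V} {v' : V'} {r : ℕ}
    (φ : ballGraph G v r ≃g ballGraph G' v' r)
    (hroot : φ (ballRoot G v r) = ballRoot G' v' r)
    {a ρ : ℕ} (har : a + ρ ≤ r) {w : V} (hwmem : w ∈ ballSet G v r) (hw : G.edist v w ≤ a)
    (x : ballSet G w ρ) (hxmem : (↑x : V) ∈ ballSet G v r) :
    (ballIsoAround φ hroot har hwmem hw x).1 = (φ ⟨↑x, hxmem⟩).1 := by
  show (φ ⟨↑x, around_mem_big har hw x⟩).1 = _
  exact congrArg (fun z => (φ z).1) (Subtype.ext rfl)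

lemma ballIsoAround_root {v : V} {v' : V'} {r : ℕ}
    (φ : ballGraph G v r ≃g ballGraph G' v' r)
    (hroot : φ (ballRoot G v r) = ballRoot G' v' r)
    {a ρ : ℕ} (har : a + ρ ≤ r) {w : V} (hwmem : w ∈ ballSet G v r) (hw : G.edist v w ≤ a) :
    ballIsoAround φ hroot har hwmem hw (ballRoot G w ρ) = ballRoot G' (φ ⟨w, hwmem⟩).1 ρ := by
  apply Subtype.ext
  show (φ ⟨↑(ballRoot G w ρ), around_mem_big har hw (ballRoot G w ρ)⟩).1 = _
  exact congrArg (fun z => (φ z).1) (Subtype.ext rfl)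

end LM
namespace LM
variable {Γ : Type*} [Group Γ] {S : Set Γ}

def transIso (S : Set Γ) (g : Γ) : cayley Γ S ≃g cayley Γ S where
  toEquiv := Equiv.mulLeft g
  map_rel_iff' := by
    intro a b
    show ((g * a ≠ g * b) ∧ ((g * a)⁻¹ * (g * b) ∈ S ∨ (g * b)⁻¹ * (g * a) ∈ S)) ↔
      ((a ≠ b) ∧ (a⁻¹ * b ∈ S ∨ b⁻¹ * a ∈ S))
    simp [mul_inv_rev, mul_assoc, inv_mul_cancel_left]

@[simp] lemma transIso_apply (g x : Γ) : transIso S g x = g * x := rfl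

lemma cayley_edist_mul (g x y : Γ) :
    (cayley Γ S).edist (g * x) (g * y) = (cayley Γ S).edist x y :=
  iso_edist (transIso S g) x y

lemma cayley_edist_submul (x y : Γ) :
    (cayley Γ S).edist 1 (x * y) ≤ (cayley Γ S).edist 1 x + (cayley Γ S).edist 1 y := by
  calc (cayley Γ S).edist 1 (x * y)
      ≤ (cayley Γ S).edist 1 x + (cayley Γ S).edist x (x * y) := SimpleGraph.edist_triangle
  _ = _ := by rw [show (cayley Γ S).edist x (x * y) = (cayley Γ S).edist 1 y from by
        rw [← cayley_edist_mul x 1 y, mul_one]]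

lemma cayley_edist_inv (x : Γ) :
    (cayley Γ S).edist 1 x⁻¹ = (cayley Γ S).edist 1 x := by
  have h := cayley_edist_mul (S := S) x⁻¹ x 1
  simp only [inv_mul_cancel, mul_one] at h
  rw [h, SimpleGraph.edist_comm]

lemma cayley_reachable (hgen : Subgroup.closure S = ⊤) (hone : (1 : Γ) ∉ S) (x : Γ) :
    (cayley Γ S).Reachable 1 x := by
  have hx : x ∈ Subgroup.closure S := hgen ▸ Subgroup.mem_top x
  have key : ∀ {a b : Γ}, (cayley Γ S).Reachable 1 b → (cayley Γ S).Reachable a (a * b) := by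
    intro a b h
    have := h.map (transIso S a).toHom
    simpa using this
  induction hx using Subgroup.closure_induction with
  | mem s hs =>
      refine SimpleGraph.Adj.reachable ?_
      refine ⟨fun h => hone (h ▸ hs), Or.inl ?_⟩
      rw [inv_one, one_mul]
      exact hs
  | one => rfl
  | mul a b _ _ iha ihb => exact iha.trans (key ihb)
  | inv a _ ih =>
      have h2 := key (a := a⁻¹) ih
      rw [inv_mul_cancel] at h2
      exact h2.symm

lemma cayley_edist_ne_top (hgen : Subgroup.closure S = ⊤) (hone : (1 : Γ) ∉ S) (x y : Γ) :
    (cayley Γ S).edist x y ≠ ⊤ := by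
  rw [SimpleGraph.edist_ne_top_iff_reachable]
  have h1 := cayley_reachable hgen hone (x⁻¹ * y)
  have h2 : (cayley Γ S).Reachable (x * 1) (x * (x⁻¹ * y)) := h1.map (transIso S x).toHom
  rwa [mul_one, mul_inv_cancel_left] at h2

lemma cayley_ball_finite (hfin : S.Finite) (hsymm : S⁻¹ = S) (k : ℕ) (v : Γ) :
    (ballSet (cayley Γ S) v k).Finite := by
  induction k generalizing v with
  | zero =>
      refine Set.Finite.subset (Set.finite_singleton v) ?_
      intro x hx
      have : (cayley Γ S).edist v x = 0 := le_antisymm (by exact_mod_cast hx) zero_le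
      simp [SimpleGraph.edist_eq_zero_iff.mp this]
  | succ k ih =>
      refine Set.Finite.subset (Set.Finite.union (Set.finite_singleton v)
        (Set.Finite.biUnion hfin (fun s _ => ih (v * s)))) ?_
      intro x hx
      by_cases hxv : x = v
      · exact Or.inl (by simp [hxv])
      have hne : (cayley Γ S).edist v x ≠ ⊤ := by
        intro hh
        have hx2 : (cayley Γ S).edist v x ≤ ((k + 1 : ℕ) : ℕ∞) := hx
        rw [hh, top_le_iff] at hx2
        exact ENat.coe_ne_top (k + 1) (by exact_mod_cast hx2)
      obtain ⟨p, hp⟩ := SimpleGraph.exists_walk_of_edist_ne_top hne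
      cases p with
      | nil => exact absurd rfl (Ne.symm hxv)
      | @cons _ y _ h q =>
          right
          have hx' : (cayley Γ S).edist v x ≤ ((k + 1 : ℕ) : ℕ∞) := hx
          rw [← hp] at hx'
          have hq1 : q.length + 1 ≤ k + 1 := by
            rw [SimpleGraph.Walk.length_cons] at hx'
            exact_mod_cast hx'
          have hyx : (cayley Γ S).edist y x ≤ (k : ℕ∞) := by
            refine le_trans (SimpleGraph.edist_le q) ?_
            exact_mod_cast Nat.succ_le_succ_iff.mp hq1
          obtain ⟨hvy, hs⟩ := h
          cases hs with
          | inl hs =>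
              refine Set.mem_biUnion hs ?_
              show (cayley Γ S).edist (v * (v⁻¹ * y)) x ≤ _
              rwa [mul_inv_cancel_left]
          | inr hs =>
              have hs' : (y⁻¹ * v)⁻¹ ∈ S := by
                rw [← hsymm, Set.mem_inv, inv_inv]
                exact hs
              refine Set.mem_biUnion hs' ?_
              show (cayley Γ S).edist (v * (y⁻¹ * v)⁻¹) x ≤ _
              rwa [mul_inv_rev, inv_inv, mul_inv_cancel_left]

end LM
namespace LM
open CategoryTheory
open scoped Classical

variable {Γ : Type*} [Group Γ]

/-- conditions describing a "bad" partial automorphism of the ball of radius `m+k` -/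
def ACond (S : Set Γ) (m k : ℕ) (f : Γ → Γ) : Prop :=
  (∀ x : Γ, ¬ ((cayley Γ S).edist 1 x ≤ ((m + k : ℕ) : ℕ∞)) → f x = x) ∧
  (∀ x : Γ, (cayley Γ S).edist 1 x ≤ ((m + k : ℕ) : ℕ∞) →
    (cayley Γ S).edist 1 (f x) = (cayley Γ S).edist 1 x) ∧
  Set.InjOn f (ballSet (cayley Γ S) 1 (m + k)) ∧
  (∀ x y : Γ, x ∈ ballSet (cayley Γ S) 1 (m + k) → y ∈ ballSet (cayley Γ S) 1 (m + k) →
    ((cayley Γ S).Adj x y ↔ (cayley Γ S).Adj (f x) (f y))) ∧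
  Set.SurjOn f (ballSet (cayley Γ S) 1 (m + k)) (ballSet (cayley Γ S) 1 (m + k)) ∧
  ∃ x : Γ, (cayley Γ S).edist 1 x ≤ (m : ℕ∞) ∧ f x ≠ x

noncomputable def resf (S : Set Γ) (j : ℕ) (f : Γ → Γ) : Γ → Γ :=
  fun x => if (cayley Γ S).edist 1 x ≤ (j : ℕ∞) then f x else x

lemma res_cond (S : Set Γ) (m : ℕ) {k k' : ℕ} (hkk : k ≤ k') {f : Γ → Γ}
    (hf : ACond S m k' f) : ACond S m k (resf S (m + k) f) := by
  obtain ⟨h1, h2, h3, h4, h5, x₀, hx₀m, hx₀⟩ := hf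
  have hmono : ∀ {x : Γ}, (cayley Γ S).edist 1 x ≤ ((m + k : ℕ) : ℕ∞) →
      (cayley Γ S).edist 1 x ≤ ((m + k' : ℕ) : ℕ∞) := by
    intro x hx
    exact le_trans hx (by exact_mod_cast Nat.add_le_add_left hkk m)
  refine ⟨?_, ?_, ?_, ?_, ?_, ?_⟩
  · intro x hx; exact if_neg hx
  · intro x hx
    show (cayley Γ S).edist 1 (if (cayley Γ S).edist 1 x ≤ ((m + k : ℕ) : ℕ∞) then f x else x) = _
    rw [if_pos hx]; exact h2 x (hmono hx)
  · intro x hx y hy hxy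
    have hx' : (cayley Γ S).edist 1 x ≤ ((m + k : ℕ) : ℕ∞) := hx
    have hy' : (cayley Γ S).edist 1 y ≤ ((m + k : ℕ) : ℕ∞) := hy
    have hxy' : f x = f y := by
      have e1 : resf S (m + k) f x = f x := if_pos hx'
      have e2 : resf S (m + k) f y = f y := if_pos hy'
      rw [← e1, ← e2]; exact hxy
    exact h3 (hmono hx) (hmono hy) hxy'
  · intro x y hx hy
    rw [show resf S (m+k) f x = f x from if_pos (hx : (cayley Γ S).edist 1 x ≤ _),
      show resf S (m+k) f y = f y from if_pos (hy : (cayley Γ S).edist 1 y ≤ _)]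
    exact h4 x y (hmono hx) (hmono hy)
  · intro y hy
    obtain ⟨x, hx, hfx⟩ := h5 (hmono hy)
    have hx2 : (cayley Γ S).edist 1 x ≤ ((m + k : ℕ) : ℕ∞) := by
      have h6 := h2 x hx
      rw [hfx] at h6
      have hy' : (cayley Γ S).edist 1 y ≤ ((m + k : ℕ) : ℕ∞) := hy
      rw [h6] at hy'
      exact hy'
    exact ⟨x, hx2, by
      show (if _ then f x else x) = y
      rw [if_pos hx2]; exact hfx⟩
  · refine ⟨x₀, hx₀m, ?_⟩
    have : (cayley Γ S).edist 1 x₀ ≤ ((m + k : ℕ) : ℕ∞) :=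
      le_trans hx₀m (by exact_mod_cast Nat.le_add_right m k)
    show (if _ then f x₀ else x₀) ≠ x₀
    rw [if_pos this]
    exact hx₀

lemma ACond_of_iso (S : Set Γ) (m k : ℕ)
    (θ : ballGraph (cayley Γ S) 1 (m + k) ≃g ballGraph (cayley Γ S) 1 (m + k))
    (hroot : θ (ballRoot (cayley Γ S) 1 (m + k)) = ballRoot (cayley Γ S) 1 (m + k))
    (x₀ : Γ) (hx₀m : (cayley Γ S).edist 1 x₀ ≤ (m : ℕ∞))
    (hx₀mem : x₀ ∈ ballSet (cayley Γ S) 1 (m + k))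
    (hbad : (↑(θ ⟨x₀, hx₀mem⟩) : Γ) ≠ x₀) :
    ACond S m k (fun x =>
      if h : x ∈ ballSet (cayley Γ S) 1 (m + k) then (↑(θ ⟨x, h⟩) : Γ) else x) := by
  refine ⟨?_, ?_, ?_, ?_, ?_, ?_⟩
  · intro x hx; exact dif_neg hx
  · intro x hx
    have hx' : x ∈ ballSet (cayley Γ S) 1 (m + k) := hx
    show (cayley Γ S).edist 1 (if h : x ∈ ballSet (cayley Γ S) 1 (m + k)
      then (↑(θ ⟨x, h⟩) : Γ) else x) = _
    rw [dif_pos hx']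
    exact rooted_iso_edist θ hroot hx'
  · intro x hx y hy hxy
    simp only [dif_pos hx, dif_pos hy] at hxy
    have : θ ⟨x, hx⟩ = θ ⟨y, hy⟩ := Subtype.ext hxy
    have := θ.injective this
    exact congrArg Subtype.val this
  · intro x y hx hy
    simp only [dif_pos hx, dif_pos hy]
    exact ⟨fun h => θ.map_rel_iff.mpr h, fun h => θ.map_rel_iff.mp h⟩
  · intro y hy
    refine ⟨↑(θ.symm ⟨y, hy⟩), (θ.symm ⟨y, hy⟩).2, ?_⟩
    show (if h : (↑(θ.symm ⟨y, hy⟩) : Γ) ∈ ballSet (cayley Γ S) 1 (m + k)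
      then (↑(θ ⟨↑(θ.symm ⟨y, hy⟩), h⟩) : Γ) else ↑(θ.symm ⟨y, hy⟩)) = y
    rw [dif_pos (θ.symm ⟨y, hy⟩).2]
    exact congrArg Subtype.val (app_coe θ _ ⟨y, hy⟩ (Subtype.ext rfl))
  · refine ⟨x₀, hx₀m, ?_⟩
    show (if h : x₀ ∈ ballSet (cayley Γ S) 1 (m + k)
      then (↑(θ ⟨x₀, h⟩) : Γ) else x₀) ≠ x₀
    rw [dif_pos hx₀mem]
    exact hbad

lemma ACond_finite (S : Set Γ) (hfin : S.Finite) (hsymm : S⁻¹ = S) (m k : ℕ) :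
    Finite {f : Γ → Γ // ACond S m k f} := by
  haveI := (cayley_ball_finite hfin hsymm (m + k) (1 : Γ)).to_subtype
  have key : Function.Injective
      (fun (f : {f : Γ → Γ // ACond S m k f}) =>
        (fun x : ballSet (cayley Γ S) 1 (m + k) =>
          (⟨f.1 ↑x, by rw [mem_ballSet, f.2.2.1 ↑x x.2]; exact x.2⟩ :
            ballSet (cayley Γ S) 1 (m + k)))) := by
    intro f g hfg
    apply Subtype.ext
    funext x
    by_cases hx : x ∈ ballSet (cayley Γ S) 1 (m + k)
    · have := congrFun hfg ⟨x, hx⟩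
      exact congrArg Subtype.val this
    · rw [f.2.1 x hx, g.2.1 x hx]
  exact Finite.of_injective _ key

/-- the inverse system of bad partial automorphisms -/
noncomputable def Asys (S : Set Γ) (m : ℕ) : ℕᵒᵖ ⥤ Type _ where
  obj k := {f : Γ → Γ // ACond S m k.unop f}
  map {k k'} h := TypeCat.ofHom fun f => ⟨resf S (m + k'.unop) f.1, res_cond S m (leOfHom h.unop) f.2⟩
  map_id k := by
    ext f x
    by_cases hx : (cayley Γ S).edist 1 x ≤ ((m + k.unop : ℕ) : ℕ∞)
    · show resf S (m + k.unop) f.1 x = f.1 x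
      exact if_pos hx
    · have e1 : resf S (m + k.unop) f.1 x = x := if_neg hx
      have e2 : f.1 x = x := f.2.1 x hx
      show resf S (m + k.unop) f.1 x = f.1 x
      rw [e1, e2]
  map_comp {k k' k''} h h' := by
    ext f x
    by_cases hx : (cayley Γ S).edist 1 x ≤ ((m + k''.unop : ℕ) : ℕ∞)
    · have hx' : (cayley Γ S).edist 1 x ≤ ((m + k'.unop : ℕ) : ℕ∞) := by
        refine le_trans hx ?_
        exact_mod_cast Nat.add_le_add_left (leOfHom h'.unop) m
      have e1 : resf S (m + k''.unop) f.1 x = f.1 x := if_pos hx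
      have e2 : resf S (m + k''.unop) (resf S (m + k'.unop) f.1) x
          = resf S (m + k'.unop) f.1 x := if_pos hx
      have e3 : resf S (m + k'.unop) f.1 x = f.1 x := if_pos hx'
      show resf S (m + k''.unop) f.1 x = resf S (m + k''.unop) (resf S (m + k'.unop) f.1) x
      rw [e1, e2, e3]
    · have e1 : resf S (m + k''.unop) f.1 x = x := if_neg hx
      have e2 : resf S (m + k''.unop) (resf S (m + k'.unop) f.1) x = x := if_neg hx
      show resf S (m + k''.unop) f.1 x = resf S (m + k''.unop) (resf S (m + k'.unop) f.1) x
      rw [e1, e2]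

end LM
namespace LM
open CategoryTheory Opposite
open scoped Classical

variable {Γ : Type*} [Group Γ]

lemma rigidity (S : Set Γ) (hfin : S.Finite) (hgen : Subgroup.closure S = ⊤)
    (hsymm : S⁻¹ = S) (hone : (1:Γ) ∉ S)
    (hreg : ∀ φ : cayley Γ S ≃g cayley Γ S, ∀ v : Γ, φ v = v → ∀ w : Γ, φ w = w)
    (m : ℕ) :
    ∃ R : ℕ, ∀ ρ : ℕ, R ≤ ρ → ∀ c : Γ,
      ∀ θ : ballGraph (cayley Γ S) c ρ ≃g ballGraph (cayley Γ S) c ρ,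
        θ (ballRoot (cayley Γ S) c ρ) = ballRoot (cayley Γ S) c ρ →
        ∀ (x : Γ) (hx : x ∈ ballSet (cayley Γ S) c ρ),
          (cayley Γ S).edist c x ≤ (m : ℕ∞) → (↑(θ ⟨x, hx⟩) : Γ) = x := by
  by_contra hcon
  push_neg at hcon
  -- Step A: for every k there is a "bad" partial automorphism at radius m + k
  have hA : ∀ k : ℕ, Nonempty {f : Γ → Γ // ACond S m k f} := by
    intro k
    obtain ⟨ρ, hρ, c, θ, hroot, x, hx, hxm, hbad⟩ := hcon (m + k)
    -- recenter at 1
    set ψ₁ := ballIsoOfIso (transIso S c) (mul_one c) ρ with hψ₁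
    set ψ₂ := ballIsoOfIso (transIso S c⁻¹) (inv_mul_cancel c) ρ with hψ₂
    set θ₁ := (ψ₁.trans θ).trans ψ₂ with hθ₁
    have hroot₁ : θ₁ (ballRoot (cayley Γ S) 1 ρ) = ballRoot (cayley Γ S) 1 ρ := by
      show ψ₂ (θ (ψ₁ _)) = _
      rw [show ψ₁ (ballRoot (cayley Γ S) 1 ρ) = ballRoot (cayley Γ S) c ρ from ballIsoOfIso_root _ _ _, hroot]
      exact ballIsoOfIso_root _ _ _
    set x₁ := c⁻¹ * x with hx₁def
    have hx₁e : (cayley Γ S).edist 1 x₁ = (cayley Γ S).edist c x := by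
      have h := cayley_edist_mul (S := S) c⁻¹ c x
      rwa [inv_mul_cancel] at h
    have hx₁mem : x₁ ∈ ballSet (cayley Γ S) 1 ρ := by
      rw [mem_ballSet, hx₁e]; exact hx
    have hx₁m : (cayley Γ S).edist 1 x₁ ≤ (m : ℕ∞) := by rw [hx₁e]; exact hxm
    have e1 : ψ₁ ⟨x₁, hx₁mem⟩ = ⟨x, hx⟩ := by
      apply Subtype.ext
      show c * (c⁻¹ * x) = x
      rw [mul_inv_cancel_left]
    have hbad₁ : (↑(θ₁ ⟨x₁, hx₁mem⟩) : Γ) ≠ x₁ := by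
      intro hcontra
      apply hbad
      have e2 : (↑(θ₁ ⟨x₁, hx₁mem⟩) : Γ) = c⁻¹ * ↑(θ ⟨x, hx⟩) := by
        show (↑(ψ₂ (θ (ψ₁ ⟨x₁, hx₁mem⟩))) : Γ) = _
        rw [e1]
        rfl
      rw [e2] at hcontra
      rw [hx₁def] at hcontra
      exact mul_left_cancel hcontra
    -- restrict radius to m + k
    have hmk : 0 + (m + k) ≤ ρ := by omega
    have hwmem : (1:Γ) ∈ ballSet (cayley Γ S) 1 ρ := root_mem_ballSet _ _ _
    have hw0 : (cayley Γ S).edist 1 1 ≤ ((0:ℕ) : ℕ∞) := by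
      rw [SimpleGraph.edist_self]; exact le_refl _
    have ec : (↑(θ₁ ⟨1, hwmem⟩) : Γ) = (1:Γ) := by
      have hr : (⟨1, hwmem⟩ : ballSet (cayley Γ S) 1 ρ) = ballRoot (cayley Γ S) 1 ρ := rfl
      rw [hr, hroot₁]
    set ι := ballIsoAround θ₁ hroot₁ hmk hwmem hw0 with hι
    set θ₂ := ι.trans (recenter ec (m + k)) with hθ₂
    have hroot₂ : θ₂ (ballRoot (cayley Γ S) 1 (m + k)) = ballRoot (cayley Γ S) 1 (m + k) := by
      apply Subtype.ext
      show (↑(recenter ec (m + k) (ι (ballRoot (cayley Γ S) 1 (m + k)))) : Γ) = 1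
      rw [recenter_coe, hι, ballIsoAround_root]
      exact ec
    have hx₁memk : x₁ ∈ ballSet (cayley Γ S) 1 (m + k) := by
      rw [mem_ballSet]
      exact le_trans hx₁m (by exact_mod_cast Nat.le_add_right m k)
    have eθ₂ : (↑(θ₂ ⟨x₁, hx₁memk⟩) : Γ) = ↑(θ₁ ⟨x₁, hx₁mem⟩) := by
      show (↑(recenter ec (m + k) (ι ⟨x₁, hx₁memk⟩)) : Γ) = _
      rw [recenter_coe, hι, ballIsoAround_coe θ₁ hroot₁ hmk hwmem hw0 ⟨x₁, hx₁memk⟩ hx₁mem]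
    have hbad₂ : (↑(θ₂ ⟨x₁, hx₁memk⟩) : Γ) ≠ x₁ := by
      intro hcontra
      rw [eθ₂] at hcontra
      exact hbad₁ hcontra
    exact ⟨⟨_, ACond_of_iso S m k θ₂ hroot₂ x₁ hx₁m hx₁memk hbad₂⟩⟩
  -- Step B: inverse limit
  haveI hne : ∀ k : ℕᵒᵖ, Nonempty ((Asys S m).obj k) := fun k => hA k.unop
  haveI hfinA : ∀ k : ℕᵒᵖ, Finite ((Asys S m).obj k) :=
    fun k => ACond_finite S hfin hsymm m k.unop
  obtain ⟨u, hu⟩ := nonempty_sections_of_finite_inverse_system (Asys S m)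
  have hcompat : ∀ (a b : ℕ), b ≤ a → ∀ x : Γ,
      (cayley Γ S).edist 1 x ≤ ((m + b : ℕ) : ℕ∞) → (u (op a)).1 x = (u (op b)).1 x := by
    intro a b hab x hxb
    have h1 := hu (homOfLE hab).op
    have h2 := congrFun (congrArg Subtype.val h1) x
    have h3 : resf S (m + b) (u (op a)).1 x = (u (op b)).1 x := h2
    rw [← h3]
    exact (if_pos hxb).symm
  have hconn : ∀ x : Γ, (cayley Γ S).edist 1 x ≠ ⊤ := cayley_edist_ne_top hgen hone 1
  set lvl := fun x : Γ => ((cayley Γ S).edist 1 x).toNat with hlvldef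
  have hlvl : ∀ x : Γ, (cayley Γ S).edist 1 x ≤ ((m + lvl x : ℕ) : ℕ∞) := by
    intro x
    calc (cayley Γ S).edist 1 x = ((lvl x : ℕ) : ℕ∞) := (ENat.coe_toNat (hconn x)).symm
    _ ≤ _ := by exact_mod_cast Nat.le_add_left _ m
  set Ψ := fun x : Γ => (u (op (lvl x))).1 x with hΨdef
  have hΨeq : ∀ (j : ℕ) (x : Γ), (cayley Γ S).edist 1 x ≤ ((m + j : ℕ) : ℕ∞) →
      Ψ x = (u (op j)).1 x := by
    intro j x hx
    have h1 := hcompat (max j (lvl x)) j (le_max_left _ _) x hx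
    have h2 := hcompat (max j (lvl x)) (lvl x) (le_max_right _ _) x (hlvl x)
    rw [hΨdef]
    simp only
    rw [← h2, h1]
  have hedistΨ : ∀ x : Γ, (cayley Γ S).edist 1 (Ψ x) = (cayley Γ S).edist 1 x :=
    fun x => (u (op (lvl x))).2.2.1 x (hlvl x)
  have hinj : Function.Injective Ψ := by
    intro x y hxy
    set j := max (lvl x) (lvl y) with hj
    have hxj : (cayley Γ S).edist 1 x ≤ ((m + j : ℕ) : ℕ∞) :=
      le_trans (hlvl x) (by exact_mod_cast Nat.add_le_add_left (le_max_left _ _) m)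
    have hyj : (cayley Γ S).edist 1 y ≤ ((m + j : ℕ) : ℕ∞) :=
      le_trans (hlvl y) (by exact_mod_cast Nat.add_le_add_left (le_max_right _ _) m)
    rw [hΨeq j x hxj, hΨeq j y hyj] at hxy
    exact (u (op j)).2.2.2.1 hxj hyj hxy
  have hsurj : Function.Surjective Ψ := by
    intro y
    obtain ⟨x, hxmem, hxy⟩ := (u (op (lvl y))).2.2.2.2.2.1 (hlvl y)
    refine ⟨x, ?_⟩
    rw [hΨeq (lvl y) x hxmem]
    exact hxy
  have hadj : ∀ x y : Γ, (cayley Γ S).Adj x y ↔ (cayley Γ S).Adj (Ψ x) (Ψ y) := by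
    intro x y
    set j := max (lvl x) (lvl y) with hj
    have hxj : (cayley Γ S).edist 1 x ≤ ((m + j : ℕ) : ℕ∞) :=
      le_trans (hlvl x) (by exact_mod_cast Nat.add_le_add_left (le_max_left _ _) m)
    have hyj : (cayley Γ S).edist 1 y ≤ ((m + j : ℕ) : ℕ∞) :=
      le_trans (hlvl y) (by exact_mod_cast Nat.add_le_add_left (le_max_right _ _) m)
    rw [hΨeq j x hxj, hΨeq j y hyj]
    exact (u (op j)).2.2.2.2.1 x y hxj hyj
  set φ : cayley Γ S ≃g cayley Γ S :=
    ⟨Equiv.ofBijective Ψ ⟨hinj, hsurj⟩, by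
      intro a b
      show (cayley Γ S).Adj (Ψ a) (Ψ b) ↔ (cayley Γ S).Adj a b
      exact (hadj a b).symm⟩ with hφ
  have hfix1 : φ 1 = 1 := by
    show Ψ 1 = 1
    have h := hedistΨ 1
    rw [SimpleGraph.edist_self] at h
    exact (SimpleGraph.edist_eq_zero_iff.mp h).symm
  have hall := hreg φ 1 hfix1
  obtain ⟨x₀, hx₀m, hx₀ne⟩ := (u (op 0)).2.2.2.2.2.2
  apply hx₀ne
  have hx₀mem : (cayley Γ S).edist 1 x₀ ≤ ((m + 0 : ℕ) : ℕ∞) := by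
    simpa using hx₀m
  rw [← hΨeq 0 x₀ hx₀mem]
  exact hall x₀
end LM

open LM in
/-- If `Γ` is finitely presented, not residually finite, and `Cay(Γ,S)` is
automorphism-regular, then for some `r` the Cayley graph has no perfect finite
`r`-local model. -/
theorem no_perfect_local_model (Γ : Type*) [Group Γ] (S : Set Γ)
    (hfp : IsFinitelyPresented Γ)
    (hfin : S.Finite) (hgen : Subgroup.closure S = ⊤) (hsymm : S⁻¹ = S) (hone : (1 : Γ) ∉ S)
    (hreg : ∀ φ : cayley Γ S ≃g cayley Γ S, ∀ v : Γ, φ v = v → ∀ w : Γ, φ w = w)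
    (hnotrf : ¬ ∀ g : Γ, g ≠ 1 →
      ∃ Λ : Subgroup Γ, Λ.Normal ∧ Λ.FiniteIndex ∧ g ∉ Λ) :
    ∃ r : ℕ, ∀ (V : Type) [Fintype V] [Nonempty V] (G₀ : SimpleGraph V),
      ¬ ∀ v : V, ∃ g : Γ, BallRootedIso G₀ v (cayley Γ S) g r := by
  classical
  push_neg at hnotrf
  obtain ⟨g₀, hg₀ne, hg₀mem⟩ := hnotrf
  obtain ⟨n, rels, hrelsfin, ⟨e⟩⟩ := hfp
  set γg : Fin n → Γ := fun i => e.symm (PresentedGroup.of i) with hγg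
  set β : FreeGroup (Fin n) →* Γ := e.symm.toMonoidHom.comp (PresentedGroup.mk rels) with hβ
  have hβof : ∀ i, β (FreeGroup.of i) = γg i := fun i => rfl
  have hconn : ∀ x : Γ, (cayley Γ S).edist 1 x ≠ ⊤ := cayley_edist_ne_top hgen hone 1
  set ℓ : Fin n → ℕ := fun i => ((cayley Γ S).edist 1 (γg i)).toNat with hℓdef
  have hℓ : ∀ i, (cayley Γ S).edist 1 (γg i) ≤ (ℓ i : ℕ∞) :=
    fun i => (ENat.coe_toNat (hconn (γg i))).ge
  set lam : List (Fin n × Bool) → ℕ := fun L => (L.map fun p => ℓ p.1).sum with hlam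
  have hlamcons : ∀ (p : Fin n × Bool) (L : List (Fin n × Bool)),
      lam (p :: L) = ℓ p.1 + lam L := by intro p L; simp [hlam]
  have hmkcons : ∀ (p : Fin n × Bool) (L : List (Fin n × Bool)),
      FreeGroup.mk (p :: L) = FreeGroup.mk [p] * FreeGroup.mk L := by
    intro p L; rw [FreeGroup.mul_mk]; rfl
  have hmktrue : ∀ i : Fin n, FreeGroup.mk [(i, true)] = FreeGroup.of i := fun i => rfl
  have hmkfalse : ∀ i : Fin n, FreeGroup.mk [(i, false)] = (FreeGroup.of i)⁻¹ := by
    intro i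
    show FreeGroup.mk [(i, false)] = (FreeGroup.mk [(i, true)])⁻¹
    rw [FreeGroup.inv_mk]
    congr 1
  have hmknil : FreeGroup.mk ([] : List (Fin n × Bool)) = 1 := by
    have : FreeGroup.mk ([] : List (Fin n × Bool)) * FreeGroup.mk [] = FreeGroup.mk [] := by
      rw [FreeGroup.mul_mk]; rfl
    exact right_eq_mul.mp this.symm
  -- length bound for β of words
  have hβbound : ∀ L : List (Fin n × Bool),
      (cayley Γ S).edist 1 (β (FreeGroup.mk L)) ≤ (lam L : ℕ∞) := by
    intro L
    induction L with
    | nil =>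
        rw [hmknil, map_one, SimpleGraph.edist_self]
        exact zero_le
    | cons p L ih =>
        rw [hmkcons, map_mul]
        refine le_trans (cayley_edist_submul _ _) ?_
        have h1 : (cayley Γ S).edist 1 (β (FreeGroup.mk [p])) ≤ (ℓ p.1 : ℕ∞) := by
          obtain ⟨i, b⟩ := p
          cases b with
          | true => rw [hmktrue, hβof]; exact hℓ i
          | false =>
              rw [hmkfalse, map_inv, hβof, cayley_edist_inv]
              exact hℓ i
        rw [hlamcons]
        calc (cayley Γ S).edist 1 (β (FreeGroup.mk [p])) + (cayley Γ S).edist 1 (β (FreeGroup.mk L))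
            ≤ (ℓ p.1 : ℕ∞) + (lam L : ℕ∞) := add_le_add h1 ih
        _ = ((ℓ p.1 + lam L : ℕ) : ℕ∞) := by push_cast; ring
  obtain ⟨x₀, hx₀⟩ := PresentedGroup.mk_surjective rels (e g₀)
  set sR := (hrelsfin.toFinset).sup (fun w => lam w.toWord) with hsR
  set sx := lam x₀.toWord with hsx
  set sG := ∑ i, ℓ i with hsG
  have hℓsum : ∀ i : Fin n, ℓ i ≤ sG :=
    fun i => Finset.single_le_sum (fun _ _ => Nat.zero_le _) (Finset.mem_univ i)
  set M := sR + sx + 2 * sG + 2 with hM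
  obtain ⟨R0, hrig⟩ := rigidity S hfin hgen hsymm hone hreg M
  refine ⟨M + max R0 M, ?_⟩
  intro V _ _ G₀ hmodel
  set R := max R0 M with hR
  set r := M + R with hr
  have hR0R : R0 ≤ R := le_max_left _ _
  have hMR : M ≤ R := le_max_right _ _
  have hMr : M ≤ r := by omega
  have hmodel' : ∀ v : V, ∃ g : Γ, ∃ f : ballGraph G₀ v r ≃g ballGraph (cayley Γ S) g r,
      f (ballRoot G₀ v r) = ballRoot (cayley Γ S) g r := hmodel
  choose cc F hF using hmodel'
  -- the transport maps
  have hcur : ∀ (u : V) (δ : Γ),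
      (cayley Γ S).edist (cc u) (cc u * δ) = (cayley Γ S).edist 1 δ := by
    intro u δ
    have h := cayley_edist_mul (S := S) (cc u) 1 δ
    rwa [mul_one] at h
  have hcmem : ∀ (u : V) (δ : Γ), (cayley Γ S).edist 1 δ ≤ (r : ℕ∞) →
      cc u * δ ∈ ballSet (cayley Γ S) (cc u) r := by
    intro u δ h
    rw [mem_ballSet, hcur]; exact h
  set T : V → Γ → V := fun u δ =>
    if h : (cayley Γ S).edist 1 δ ≤ (r : ℕ∞)
    then ((F u).symm ⟨cc u * δ, hcmem u δ h⟩).1 else u with hT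
  have hFsymmroot : ∀ u : V,
      (F u).symm (ballRoot (cayley Γ S) (cc u) r) = ballRoot G₀ u r :=
    fun u => symm_coe (F u) _ _ (hF u).symm
  have hTval : ∀ (u : V) (δ : Γ) (h : (cayley Γ S).edist 1 δ ≤ (r : ℕ∞))
      (p : cc u * δ ∈ ballSet (cayley Γ S) (cc u) r),
      T u δ = ((F u).symm ⟨cc u * δ, p⟩).1 := fun u δ h _ => dif_pos h
  have hone_le : (cayley Γ S).edist 1 (1 : Γ) ≤ (r : ℕ∞) := by
    rw [SimpleGraph.edist_self]; exact zero_le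
  have hT1 : ∀ u : V, T u 1 = u := by
    intro u
    rw [hTval u 1 hone_le (hcmem u 1 hone_le)]
    rw [show (⟨cc u * 1, hcmem u 1 hone_le⟩ : ballSet (cayley Γ S) (cc u) r)
        = ballRoot (cayley Γ S) (cc u) r from Subtype.ext (mul_one _)]
    rw [hFsymmroot]
  have hTinj : ∀ (u : V) (δ δ' : Γ), (cayley Γ S).edist 1 δ ≤ (r : ℕ∞) →
      (cayley Γ S).edist 1 δ' ≤ (r : ℕ∞) → T u δ = T u δ' → δ = δ' := by
    intro u δ δ' h h' heq
    rw [hTval u δ h (hcmem u δ h), hTval u δ' h' (hcmem u δ' h')] at heq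
    have h2 := (F u).symm.injective (Subtype.ext heq)
    have h3 := congrArg Subtype.val h2
    exact mul_left_cancel h3
  have hTchar : ∀ (u : V) (δ : Γ) (h : (cayley Γ S).edist 1 δ ≤ (r : ℕ∞))
      (A : ballSet G₀ u r), ((F u) A).1 = cc u * δ → (A : V) = T u δ := by
    intro u δ h A hA
    have h2 : F u A = ⟨cc u * δ, hcmem u δ h⟩ := Subtype.ext hA
    have h3 : A = (F u).symm ⟨cc u * δ, hcmem u δ h⟩ := by
      rw [← h2, (F u).symm_apply_apply]
    rw [hTval u δ h (hcmem u δ h), ← h3]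
  -- the composition lemma
  have hTcomp : ∀ (u : V) (γ γ' : Γ) (a b : ℕ),
      (cayley Γ S).edist 1 γ ≤ (a : ℕ∞) → (cayley Γ S).edist 1 γ' ≤ (b : ℕ∞) →
      a + b ≤ M → T u (γ * γ') = T (T u γ) γ' := by
    intro u γ γ' a b ha hb hab
    have haM : a ≤ M := by omega
    have hbM : b ≤ M := by omega
    have hγr : (cayley Γ S).edist 1 γ ≤ (r : ℕ∞) :=
      le_trans ha (by exact_mod_cast le_trans haM hMr)
    have hγ'r : (cayley Γ S).edist 1 γ' ≤ (r : ℕ∞) :=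
      le_trans hb (by exact_mod_cast le_trans hbM hMr)
    have hγγ' : (cayley Γ S).edist 1 (γ * γ') ≤ ((a + b : ℕ) : ℕ∞) := by
      refine le_trans (cayley_edist_submul _ _) ?_
      calc (cayley Γ S).edist 1 γ + (cayley Γ S).edist 1 γ' ≤ (a : ℕ∞) + (b : ℕ∞) :=
            add_le_add ha hb
      _ = ((a + b : ℕ) : ℕ∞) := by push_cast; ring
    have hγγ'r : (cayley Γ S).edist 1 (γ * γ') ≤ (r : ℕ∞) :=
      le_trans hγγ' (by exact_mod_cast le_trans hab hMr)
    set v' := T u γ with hv'def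
    have hv'val : v' = ((F u).symm ⟨cc u * γ, hcmem u γ hγr⟩).1 := hTval u γ hγr _
    have huv' : G₀.edist u v' ≤ (a : ℕ∞) := by
      rw [hv'val, rooted_iso_edist (F u).symm (hFsymmroot u) (hcmem u γ hγr), hcur]
      exact ha
    have hv'mem : v' ∈ ballSet G₀ u r :=
      le_trans huv' (by exact_mod_cast le_trans haM hMr)
    set ρ := r - a with hρdef
    have har : a + ρ ≤ r := by omega
    have hρR : R0 ≤ ρ := by omega
    have hbρ : b ≤ ρ := by omega
    have ecα : ((F u) ⟨v', hv'mem⟩).1 = cc u * γ := by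
      rw [show (⟨v', hv'mem⟩ : ballSet G₀ u r)
          = (F u).symm ⟨cc u * γ, hcmem u γ hγr⟩ from Subtype.ext hv'val]
      exact congrArg Subtype.val ((F u).apply_symm_apply _)
    set α := (ballIsoAround (F u) (hF u) har hv'mem huv').trans (recenter ecα ρ) with hα
    have hv'v' : G₀.edist v' v' ≤ ((0:ℕ) : ℕ∞) := by
      rw [SimpleGraph.edist_self]; exact le_refl _
    have hv'memself : v' ∈ ballSet G₀ v' r := root_mem_ballSet _ _ _
    have har0 : 0 + ρ ≤ r := by omega
    have ecβ : ((F v') ⟨v', hv'memself⟩).1 = cc v' := by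
      rw [show (⟨v', hv'memself⟩ : ballSet G₀ v' r) = ballRoot G₀ v' r from rfl]
      exact congrArg Subtype.val (hF v')
    set βi := (ballIsoAround (F v') (hF v') har0 hv'memself hv'v').trans (recenter ecβ ρ)
      with hβi
    have hvτ : (transIso S (cc v' * (cc u * γ)⁻¹)) (cc u * γ) = cc v' := by
      show cc v' * (cc u * γ)⁻¹ * (cc u * γ) = cc v'
      group
    set τ := ballIsoOfIso (transIso S (cc v' * (cc u * γ)⁻¹)) hvτ ρ with hτ
    set Θ := (βi.symm.trans α).trans τ with hΘ
    have hαroot : α (ballRoot G₀ v' ρ) = ballRoot (cayley Γ S) (cc u * γ) ρ := by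
      apply Subtype.ext
      show (↑(recenter ecα ρ
        (ballIsoAround (F u) (hF u) har hv'mem huv' (ballRoot G₀ v' ρ))) : Γ) = cc u * γ
      rw [recenter_coe, ballIsoAround_root]
      exact ecα
    have hβroot : βi (ballRoot G₀ v' ρ) = ballRoot (cayley Γ S) (cc v') ρ := by
      apply Subtype.ext
      show (↑(recenter ecβ ρ
        (ballIsoAround (F v') (hF v') har0 hv'memself hv'v' (ballRoot G₀ v' ρ))) : Γ) = cc v'
      rw [recenter_coe, ballIsoAround_root]
      exact ecβ
    have hΘroot : Θ (ballRoot (cayley Γ S) (cc v') ρ) = ballRoot (cayley Γ S) (cc v') ρ := by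
      show τ (α (βi.symm (ballRoot (cayley Γ S) (cc v') ρ))) = _
      rw [symm_coe βi _ _ hβroot.symm, hαroot, hτ, ballIsoOfIso_root]
    have hxmem : cc v' * γ' ∈ ballSet (cayley Γ S) (cc v') ρ := by
      rw [mem_ballSet, hcur]
      exact le_trans hb (by exact_mod_cast hbρ)
    have hxm : (cayley Γ S).edist (cc v') (cc v' * γ') ≤ (M : ℕ∞) := by
      rw [hcur]
      exact le_trans hb (by exact_mod_cast hbM)
    have hfix := hrig ρ hρR (cc v') Θ hΘroot (cc v' * γ') hxmem hxm
    set z := βi.symm ⟨cc v' * γ', hxmem⟩ with hz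
    have hταz : τ (α z) = ⟨cc v' * γ', hxmem⟩ := Subtype.ext hfix
    have hαz : α z = τ.symm ⟨cc v' * γ', hxmem⟩ := (symm_coe τ _ _ hταz.symm).symm
    have hmem' : cc u * (γ * γ') ∈ ballSet (cayley Γ S) (cc u * γ) ρ := by
      rw [mem_ballSet, show cc u * (γ * γ') = (cc u * γ) * γ' from by group,
        show (cayley Γ S).edist (cc u * γ) (cc u * γ * γ') = (cayley Γ S).edist 1 γ' from by
          have h := cayley_edist_mul (S := S) (cc u * γ) 1 γ'
          rwa [mul_one] at h]
      exact le_trans hb (by exact_mod_cast hbρ)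
    have hτfwd : τ ⟨cc u * (γ * γ'), hmem'⟩ = ⟨cc v' * γ', hxmem⟩ := by
      apply Subtype.ext
      rw [hτ]
      show (transIso S (cc v' * (cc u * γ)⁻¹)) (cc u * (γ * γ')) = cc v' * γ'
      rw [transIso_apply]
      group
    have hτs : τ.symm ⟨cc v' * γ', hxmem⟩ = ⟨cc u * (γ * γ'), hmem'⟩ :=
      symm_coe τ _ _ hτfwd.symm
    have hzmemu : (↑z : V) ∈ ballSet G₀ u r := around_mem_big har huv' z
    have hαzval : (↑(α z) : Γ) = ((F u) ⟨↑z, hzmemu⟩).1 := by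
      rw [hα]
      show (↑(recenter ecα ρ (ballIsoAround (F u) (hF u) har hv'mem huv' z)) : Γ) = _
      rw [recenter_coe, ballIsoAround_coe (F u) (hF u) har hv'mem huv' z hzmemu]
    have hFuz : ((F u) ⟨↑z, hzmemu⟩).1 = cc u * (γ * γ') := by
      rw [← hαzval, hαz, hτs]
    have hzT1 : (↑z : V) = T u (γ * γ') := hTchar u (γ * γ') hγγ'r ⟨↑z, hzmemu⟩ hFuz
    have hzmemv' : (↑z : V) ∈ ballSet G₀ v' r := around_mem_big har0 hv'v' z
    have hβz : βi z = ⟨cc v' * γ', hxmem⟩ := by rw [hz]; exact βi.apply_symm_apply _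
    have hβzval : (↑(βi z) : Γ) = ((F v') ⟨↑z, hzmemv'⟩).1 := by
      rw [hβi]
      show (↑(recenter ecβ ρ (ballIsoAround (F v') (hF v') har0 hv'memself hv'v' z)) : Γ) = _
      rw [recenter_coe, ballIsoAround_coe (F v') (hF v') har0 hv'memself hv'v' z hzmemv']
    have hFv'z : ((F v') ⟨↑z, hzmemv'⟩).1 = cc v' * γ' := by
      rw [← hβzval, hβz]
    have hzT2 : (↑z : V) = T v' γ' := hTchar v' γ' hγ'r ⟨↑z, hzmemv'⟩ hFv'z
    rw [← hzT1, hzT2]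
  -- the permutations
  have hℓinv : ∀ i : Fin n, (cayley Γ S).edist 1 (γg i)⁻¹ ≤ (ℓ i : ℕ∞) := by
    intro i; rw [cayley_edist_inv]; exact hℓ i
  set E : Fin n → Equiv.Perm V := fun i =>
    { toFun := fun u => T u (γg i)⁻¹
      invFun := fun u => T u (γg i)
      left_inv := by
        intro u
        show T (T u (γg i)⁻¹) (γg i) = u
        have h2 : ℓ i + ℓ i ≤ M := by have := hℓsum i; omega
        rw [← hTcomp u (γg i)⁻¹ (γg i) (ℓ i) (ℓ i) (hℓinv i) (hℓ i) h2,
          inv_mul_cancel, hT1]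
      right_inv := by
        intro u
        show T (T u (γg i)) (γg i)⁻¹ = u
        have h2 : ℓ i + ℓ i ≤ M := by have := hℓsum i; omega
        rw [← hTcomp u (γg i) (γg i)⁻¹ (ℓ i) (ℓ i) (hℓ i) (hℓinv i) h2,
          mul_inv_cancel, hT1] } with hE
  have hEapp : ∀ (i : Fin n) (u : V), E i u = T u (γg i)⁻¹ := fun i u => rfl
  have hEinv : ∀ (i : Fin n) (u : V), (E i)⁻¹ u = T u (γg i) := fun i u => rfl
  -- main word computation
  have hmain : ∀ L : List (Fin n × Bool), lam L ≤ M → ∀ u : V,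
      (FreeGroup.lift E (FreeGroup.mk L)) u = T u ((β (FreeGroup.mk L))⁻¹) := by
    intro L
    induction L with
    | nil =>
        intro _ u
        rw [hmknil, map_one, map_one, inv_one, hT1]
        exact Equiv.Perm.one_apply u
    | cons p L ih =>
        intro hlamle u
        obtain ⟨i, b⟩ := p
        have hlamc : lam ((i, b) :: L) = ℓ i + lam L := hlamcons (i, b) L
        have hlamL : lam L ≤ M := by omega
        have hsum : lam L + ℓ i ≤ M := by omega
        rw [hmkcons, map_mul, Equiv.Perm.mul_apply, ih hlamL u]
        have hβL := hβbound L
        have hβLinv : (cayley Γ S).edist 1 (β (FreeGroup.mk L))⁻¹ ≤ ((lam L : ℕ) : ℕ∞) := by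
          rw [cayley_edist_inv]; exact hβL
        cases b with
        | true =>
            rw [hmktrue, FreeGroup.lift_apply_of, hEapp,
              ← hTcomp u (β (FreeGroup.mk L))⁻¹ (γg i)⁻¹ (lam L) (ℓ i) hβLinv (hℓinv i) hsum]
            congr 1
            rw [map_mul, hβof, mul_inv_rev]
        | false =>
            rw [hmkfalse, map_inv, FreeGroup.lift_apply_of, hEinv,
              ← hTcomp u (β (FreeGroup.mk L))⁻¹ (γg i) (lam L) (ℓ i) hβLinv (hℓ i) hsum]
            congr 1
            rw [map_mul, map_inv, hβof, mul_inv_rev, inv_inv]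
  -- relators vanish
  have hrelvanish : ∀ w ∈ rels, FreeGroup.lift E w = 1 := by
    intro w hw
    have hwle : lam w.toWord ≤ M := by
      have h5 : lam w.toWord ≤ sR := by
        rw [hsR]
        exact Finset.le_sup (f := fun w : FreeGroup (Fin n) => lam w.toWord)
          ((Set.Finite.mem_toFinset hrelsfin).mpr hw)
      omega
    apply Equiv.ext
    intro u
    have h2 := hmain w.toWord hwle u
    rw [FreeGroup.mk_toWord] at h2
    rw [h2]
    have h3 : PresentedGroup.mk rels w = 1 :=
      (QuotientGroup.eq_one_iff w).mpr (Subgroup.subset_normalClosure hw)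
    have hβw : β w = 1 := by
      show e.symm (PresentedGroup.mk rels w) = 1
      rw [h3, map_one]
    rw [hβw, inv_one, hT1]
    exact (Equiv.Perm.one_apply u).symm
  set σ : Γ →* Equiv.Perm V := (PresentedGroup.toGroup hrelvanish).comp e.toMonoidHom with hσ
  haveI hker : σ.ker.Normal := MonoidHom.normal_ker σ
  have hfinidx : σ.ker.FiniteIndex := by
    haveI : Finite (Γ ⧸ σ.ker) := Finite.of_equiv _ (QuotientGroup.quotientKerEquivRange σ).symm.toEquiv
    exact Subgroup.finiteIndex_of_finite_quotient
  have hg₀K : g₀ ∈ σ.ker := hg₀mem σ.ker hker hfinidx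
  have hσg₀ : σ g₀ = 1 := hg₀K
  have hσval : σ g₀ = FreeGroup.lift E x₀ := by
    show PresentedGroup.toGroup hrelvanish (e g₀) = _
    rw [← hx₀]
    rfl
  have hlift1 : FreeGroup.lift E x₀ = 1 := by rw [← hσval]; exact hσg₀
  obtain u₀ := Classical.arbitrary V
  have hsxle : lam x₀.toWord ≤ M := by omega
  have hval : FreeGroup.lift E x₀ u₀ = T u₀ ((β x₀)⁻¹) := by
    have h2 := hmain x₀.toWord hsxle u₀
    rwa [FreeGroup.mk_toWord] at h2
  have hβx₀ : β x₀ = g₀ := by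
    show e.symm (PresentedGroup.mk rels x₀) = g₀
    rw [hx₀]
    exact e.symm_apply_apply g₀
  have hfixed : T u₀ (g₀⁻¹) = u₀ := by
    rw [← hβx₀, ← hval, hlift1]
    exact Equiv.Perm.one_apply u₀
  have hg₀bound : (cayley Γ S).edist 1 g₀⁻¹ ≤ (r : ℕ∞) := by
    rw [cayley_edist_inv, ← hβx₀]
    have h2 := hβbound x₀.toWord
    rw [FreeGroup.mk_toWord] at h2
    exact le_trans h2 (by exact_mod_cast le_trans hsxle hMr)
  have hfinal : g₀⁻¹ = 1 := by
    refine hTinj u₀ g₀⁻¹ 1 hg₀bound hone_le ?_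
    rw [hfixed, hT1]
  exact hg₀ne (inv_eq_one.mp hfinal)
end

section
/- The Baumslag–Solitar group BS(m,n) = ⟨a, b ∣ a b^m a⁻¹ = b^n⟩ with n > m ≥ 2 and gcd-condition m ∤ n, n ∤ m is not residually finite; in particular, there exists a nontrivial element contained in every finite-index subgroup. -/
/-- The single Baumslag–Solitar relator `a b^m a⁻¹ (b^n)⁻¹` in the free group on two
generators (`true` playing the role of `a`, `false` of `b`). -/
def bsRel (m n : ℕ) : Set (FreeGroup Bool) :=
  {FreeGroup.of true * FreeGroup.of false ^ m * (FreeGroup.of true)⁻¹ *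
    (FreeGroup.of false ^ n)⁻¹}

open Multiplicative

namespace BSAux

def Am (m : ℕ) : Subgroup (Multiplicative ℤ) := Subgroup.zpowers (ofAdd (m:ℤ))

lemma mem_Am {m : ℕ} {z : Multiplicative ℤ} : z ∈ Am m ↔ (m:ℤ) ∣ z.toAdd := by
  rw [Am, Subgroup.mem_zpowers_iff]
  constructor
  · rintro ⟨k, rfl⟩; exact ⟨k, by simp [mul_comm]⟩
  · rintro ⟨k, hk⟩
    refine ⟨k, ?_⟩
    rw [← ofAdd_toAdd z, hk, ← ofAdd_zsmul]
    simp [mul_comm]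

def φmn (m n : ℕ) (hm : (m:ℤ) ≠ 0) (hn : (n:ℤ) ≠ 0) : Am m ≃* Am n where
  toFun a := ⟨ofAdd ((toAdd a.1 / (m:ℤ)) * n), mem_Am.2 (by simp)⟩
  invFun b := ⟨ofAdd ((toAdd b.1 / (n:ℤ)) * m), mem_Am.2 (by simp)⟩
  left_inv a := by
    ext
    simp only [toAdd_ofAdd]
    rw [Int.mul_ediv_cancel _ hn, Int.ediv_mul_cancel (mem_Am.1 a.2)]
  right_inv b := by
    ext
    simp only [toAdd_ofAdd]
    rw [Int.mul_ediv_cancel _ hm, Int.ediv_mul_cancel (mem_Am.1 b.2)]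
  map_mul' a b := by
    ext
    obtain ⟨c, hc⟩ := mem_Am.1 a.2
    obtain ⟨d, hd⟩ := mem_Am.1 b.2
    simp only [Subgroup.coe_mul, toAdd_mul, toAdd_ofAdd, hc, hd, ← ofAdd_add]
    rw [← mul_add, Int.mul_ediv_cancel_left _ hm, Int.mul_ediv_cancel_left _ hm,
      Int.mul_ediv_cancel_left _ hm, add_mul]

lemma φmn_apply_m (m n : ℕ) (hm : (m:ℤ) ≠ 0) (hn : (n:ℤ) ≠ 0) :
    (φmn m n hm hn ⟨ofAdd (m:ℤ), mem_Am.2 ⟨1, (mul_one _).symm⟩⟩ : Multiplicative ℤ)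
      = ofAdd (n:ℤ) := by
  show ofAdd ((toAdd (ofAdd (m:ℤ)) / (m:ℤ)) * n) = ofAdd (n:ℤ)
  rw [toAdd_ofAdd, Int.ediv_self hm, one_mul]

variable (m n : ℕ) (hm : (m:ℤ) ≠ 0) (hn : (n:ℤ) ≠ 0)

abbrev H := HNNExtension (Multiplicative ℤ) (Am m) (Am n) (φmn m n hm hn)

open HNNExtension

lemma ofAdd_one_pow (j : ℕ) : (ofAdd (1:ℤ)) ^ j = ofAdd (j:ℤ) := by
  rw [← ofAdd_nsmul]; simp

/-- the defining homomorphism BS(m,n) → HNN extension -/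
noncomputable def F : PresentedGroup (bsRel m n) →* H m n hm hn :=
  PresentedGroup.toGroup (f := fun b => Bool.rec (of (ofAdd (1:ℤ))) t b) (by
    rintro r rfl
    simp only [map_mul, map_pow, map_inv, FreeGroup.lift_apply_of]
    show t * (of (ofAdd (1:ℤ)))^m * t⁻¹ * ((of (ofAdd (1:ℤ)))^n)⁻¹ = 1
    have hpow : ∀ j : ℕ, (of (ofAdd (1:ℤ)) : H m n hm hn) ^ j = of (ofAdd (j:ℤ)) := by
      intro j
      rw [← ofAdd_one_pow j]
      exact (map_pow (of : Multiplicative ℤ →* H m n hm hn) (ofAdd 1) j).symm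
    rw [hpow, hpow]
    have ht : (t * of (ofAdd (m:ℤ)) : H m n hm hn) = of (ofAdd (n:ℤ)) * t := by
      have := t_mul_of (φ := φmn m n hm hn) ⟨ofAdd (m:ℤ), mem_Am.2 ⟨1, (mul_one _).symm⟩⟩
      rwa [φmn_apply_m] at this
    rw [ht]
    group)

lemma F_of_true : F m n hm hn (PresentedGroup.of true) = t := by
  simp [F, PresentedGroup.toGroup.of]

lemma F_of_false : F m n hm hn (PresentedGroup.of false) = of (ofAdd (1:ℤ)) := by
  simp [F, PresentedGroup.toGroup.of]

lemma of_ofAdd_one_pow (j : ℕ) :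
    (of (ofAdd (1:ℤ)) : H m n hm hn) ^ j = of (ofAdd (j:ℤ)) := by
  rw [← ofAdd_one_pow j]
  exact (map_pow (of : Multiplicative ℤ →* H m n hm hn) (ofAdd 1) j).symm

lemma key_ne_one (k : ℕ) (hmk : ¬ (m:ℤ) ∣ (k:ℤ)) (hn1 : ¬ (n:ℤ) ∣ (1:ℤ)) :
    (t * of (ofAdd (k:ℤ)) * t⁻¹) * of (ofAdd (1:ℤ)) * (t * of (ofAdd (k:ℤ)) * t⁻¹)⁻¹ *
      (of (ofAdd (1:ℤ)))⁻¹ ≠ (1 : H m n hm hn) := by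
  intro h1
  have hmk' : ¬ (m:ℤ) ∣ (-(k:ℤ)) := fun h => hmk ((dvd_neg).1 h)
  let w : HNNExtension.NormalWord.ReducedWord (Multiplicative ℤ) (Am m) (Am n) :=
    { head := 1
      toList := [(1, ofAdd (k:ℤ)), (-1, ofAdd (1:ℤ)), (1, (ofAdd (k:ℤ))⁻¹),
        (-1, (ofAdd (1:ℤ))⁻¹)]
      chain := by
        refine List.isChain_cons_cons.2 ⟨?_, List.isChain_cons_cons.2 ⟨?_, List.isChain_cons_cons.2
          ⟨?_, List.isChain_singleton _⟩⟩⟩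
        · intro h; exact absurd (mem_Am.1 h) (by simpa using hmk)
        · intro h; exact absurd (mem_Am.1 h) (by simpa using hn1)
        · intro h; exact absurd (mem_Am.1 h) (by simpa using hmk') }
  have hw : HNNExtension.NormalWord.ReducedWord.prod (φmn m n hm hn) w =
      (t * of (ofAdd (k:ℤ)) * t⁻¹) * of (ofAdd (1:ℤ)) * (t * of (ofAdd (k:ℤ)) * t⁻¹)⁻¹ *
        (of (ofAdd (1:ℤ)))⁻¹ := by
    simp only [HNNExtension.NormalWord.ReducedWord.prod, w, List.map_cons, List.map_nil, List.prod_cons, List.prod_nil,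
      map_one, one_mul, mul_one, Units.val_one, zpow_one, Units.val_neg, zpow_neg, map_inv,
      mul_inv_rev, inv_inv]
    group
  have hnil := HNNExtension.ReducedWord.toList_eq_nil_of_mem_of_range (φmn m n hm hn) w
    (by rw [hw, h1]; exact one_mem _)
  simpa [w] using hnil

lemma pg_rel : (PresentedGroup.of (rels := bsRel m n) true) * (PresentedGroup.of false) ^ m *
    (PresentedGroup.of true)⁻¹ = (PresentedGroup.of false) ^ n := by
  have h : PresentedGroup.mk (bsRel m n)
      (FreeGroup.of true * FreeGroup.of false ^ m * (FreeGroup.of true)⁻¹ *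
        (FreeGroup.of false ^ n)⁻¹) = 1 := by
    apply (QuotientGroup.eq_one_iff _).2
    exact Subgroup.subset_normalClosure rfl
  simp only [map_mul, map_pow, map_inv] at h
  have := mul_inv_eq_one.1 h
  simpa [PresentedGroup.of] using this

end BSAux

/-- The Baumslag–Solitar group `BS(m,n) = ⟨a, b ∣ a b^m a⁻¹ = b^n⟩` with `n > m ≥ 2`,
`m ∤ n` and `n ∤ m`, is not residually finite; in particular some nontrivial element lies
in every finite-index subgroup. -/
theorem baumslagSolitar_not_residuallyFinite (m n : ℕ)
    (hm : 2 ≤ m) (hmn : m < n) (hnd1 : ¬ m ∣ n) (hnd2 : ¬ n ∣ m) :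
    (¬ ∀ g : PresentedGroup (bsRel m n), g ≠ 1 →
      ∃ Λ : Subgroup (PresentedGroup (bsRel m n)), Λ.Normal ∧ Λ.FiniteIndex ∧ g ∉ Λ) ∧
    ∃ g : PresentedGroup (bsRel m n), g ≠ 1 ∧
      ∀ Λ : Subgroup (PresentedGroup (bsRel m n)), Λ.FiniteIndex → g ∈ Λ := by
  have hm0 : (m:ℤ) ≠ 0 := by exact_mod_cast (by omega : m ≠ 0)
  have hn0 : (n:ℤ) ≠ 0 := by exact_mod_cast (by omega : n ≠ 0)
  set k := m.gcd n with hk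
  have hkn : k ∣ n := Nat.gcd_dvd_right _ _
  have hmk : ¬ (m:ℤ) ∣ (k:ℤ) := by
    intro h
    exact hnd1 ((Int.natCast_dvd_natCast.1 h).trans hkn)
  have hn1 : ¬ (n:ℤ) ∣ (1:ℤ) := by
    intro h
    have : n ∣ 1 := Int.natCast_dvd_natCast.1 h
    have := Nat.le_of_dvd one_pos this
    omega
  set α : PresentedGroup (bsRel m n) := PresentedGroup.of true with hα
  set β : PresentedGroup (bsRel m n) := PresentedGroup.of false with hβ
  set g : PresentedGroup (bsRel m n) :=
    (α * β ^ k * α⁻¹) * β * (α * β ^ k * α⁻¹)⁻¹ * β⁻¹ with hgdef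
  have hrel : α * β ^ m * α⁻¹ = β ^ n := BSAux.pg_rel m n
  have hg_ne : g ≠ 1 := by
    intro hg1
    apply BSAux.key_ne_one m n hm0 hn0 k hmk hn1
    have h2 := congrArg (BSAux.F m n hm0 hn0) hg1
    simp only [hgdef, map_mul, map_inv, map_pow, map_one, hα, hβ,
      BSAux.F_of_true, BSAux.F_of_false, BSAux.of_ofAdd_one_pow] at h2
    simpa [mul_inv_rev, inv_inv, mul_assoc] using h2
  have hmem : ∀ Λ : Subgroup (PresentedGroup (bsRel m n)), Λ.FiniteIndex → g ∈ Λ := by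
    intro Λ hΛ
    haveI := hΛ
    haveI : Λ.normalCore.FiniteIndex := Subgroup.finiteIndex_normalCore Λ
    apply Λ.normalCore_le
    haveI : Finite (PresentedGroup (bsRel m n) ⧸ Λ.normalCore) :=
      Nat.finite_of_card_ne_zero Subgroup.FiniteIndex.index_ne_zero
    rw [← QuotientGroup.eq_one_iff]
    set π : PresentedGroup (bsRel m n) →* PresentedGroup (bsRel m n) ⧸ Λ.normalCore :=
      QuotientGroup.mk' Λ.normalCore with hπ
    show π g = 1
    set a' := π α with ha'
    set b' := π β with hb'
    have hconj : a' * b' ^ m * a'⁻¹ = b' ^ n := by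
      rw [ha', hb', ← map_pow, ← map_inv, ← map_mul, ← map_mul, hrel, map_pow]
    set r := orderOf b' with hr
    have hrpos : 0 < r := orderOf_pos b'
    have horder : orderOf (b' ^ m) = orderOf (b' ^ n) := by
      calc orderOf (b' ^ m) = orderOf (MulAut.conj a' (b' ^ m)) :=
            ((MulAut.conj a').orderOf_eq _).symm
        _ = orderOf (b' ^ n) := by rw [MulAut.conj_apply, hconj]
    have hgcd : r.gcd m = r.gcd n := by
      have h2 : r / r.gcd m = r / r.gcd n := by
        rw [← orderOf_pow, ← orderOf_pow, horder]
      rw [← Nat.div_div_self (Nat.gcd_dvd_left r m) hrpos.ne', h2,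
        Nat.div_div_self (Nat.gcd_dvd_left r n) hrpos.ne']
    set d := r.gcd m with hd
    have hdk : d ∣ k := Nat.dvd_gcd (Nat.gcd_dvd_right r m) (hgcd ▸ Nat.gcd_dvd_right r n)
    obtain ⟨e, he⟩ := hdk
    have hbz : b' ^ (d:ℤ) = (b' ^ (m:ℤ)) ^ (Nat.gcdB r m) := by
      have h3 : (d:ℤ) = r * Nat.gcdA r m + m * Nat.gcdB r m := Nat.gcd_eq_gcd_ab r m
      calc b' ^ (d:ℤ) = b' ^ ((r:ℤ) * Nat.gcdA r m) * b' ^ ((m:ℤ) * Nat.gcdB r m) := by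
            rw [← zpow_add, ← h3]
        _ = (b' ^ (m:ℤ)) ^ (Nat.gcdB r m) := by
            rw [zpow_mul, zpow_mul, zpow_natCast, hr, pow_orderOf_eq_one, one_zpow, one_mul]
    set s : ℤ := Nat.gcdB r m * e with hs
    have hck : b' ^ (k:ℤ) = (b' ^ (m:ℤ)) ^ s := by
      have : (k:ℤ) = (d:ℤ) * e := by exact_mod_cast he
      rw [this, zpow_mul, hbz, ← zpow_mul, hs]
    have hc : a' * b' ^ k * a'⁻¹ = b' ^ ((n:ℤ) * s) := by
      have h4 : a' * b' ^ (k:ℤ) * a'⁻¹ = (a' * b' ^ (m:ℤ) * a'⁻¹) ^ s := by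
        rw [hck, conj_zpow]
      rw [← zpow_natCast b' k, h4, zpow_natCast b' m, hconj, ← zpow_natCast b' n, ← zpow_mul]
    have hcomm : (a' * b' ^ k * a'⁻¹) * b' = b' * (a' * b' ^ k * a'⁻¹) := by
      rw [hc]
      calc b' ^ ((n:ℤ) * s) * b' = b' ^ ((n:ℤ) * s) * b' ^ (1:ℤ) := by rw [zpow_one]
        _ = b' ^ (1:ℤ) * b' ^ ((n:ℤ) * s) := zpow_mul_comm _ _ _
        _ = b' * b' ^ ((n:ℤ) * s) := by rw [zpow_one]
    have : π g = 1 := by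
      rw [hgdef]
      simp only [map_mul, map_inv]
      rw [map_pow, ← hb']
      rw [hcomm]
      rw [← ha']
      group
    exact this
  refine ⟨?_, g, hg_ne, hmem⟩
  intro hAll
  obtain ⟨Λ, _, hFI, hgnot⟩ := hAll g hg_ne
  exact hgnot (hmem Λ hFI)
end
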